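/- arXiv:1703.02919 — 6 statements merged into one kernel-verified Lean document; each statement's English description precedes it below -/
import Mathlib

section
/- Let X and Y be Banach spaces and let N be an absolute normalized norm on ℝ² with N(1,1) > 1. Then the direct sum X ⊕_N Y (with norm ‖(x,y)‖ = N(‖x‖,‖y‖)) contains a finite convex combination of slices of its closed unit ball that is not open in the relative weak topology of the closed unit ball. -/
open scoped Pointwise

noncomputable section

section AbsoluteSum

variable (X Y : Type*) [NormedAddCommGroup X] [NormedSpace ℝ X]
  [NormedAddCommGroup Y] [NormedSpace ℝ Y] (N : ℝ × ℝ → ℝ)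

/-- The closed unit ball of `X ⊕_N Y`, the direct sum equipped with the norm
`‖(x, y)‖ = N(‖x‖, ‖y‖)`. -/
def NBall : Set (X × Y) := {p | N (‖p.1‖, ‖p.2‖) ≤ 1}

/-- A functional on `X ⊕_N Y` (identified with a pair of functionals) lies on the
dual unit sphere: it is bounded by `1` on the unit ball and its supremum there is `1`. -/
def NDualSphere (f : StrongDual ℝ X × StrongDual ℝ Y) : Prop :=
  (∀ p ∈ NBall X Y N, f.1 p.1 + f.2 p.2 ≤ 1) ∧
    ∀ ε > 0, ∃ p ∈ NBall X Y N, 1 - ε < f.1 p.1 + f.2 p.2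

/-- The slice `S(f, α)` of the closed unit ball of `X ⊕_N Y`. -/
def NSlice (f : StrongDual ℝ X × StrongDual ℝ Y) (α : ℝ) : Set (X × Y) :=
  {p ∈ NBall X Y N | 1 - α < f.1 p.1 + f.2 p.2}

/-- `z` is an interior point of `C` in the relative weak topology of the closed unit
ball of `X ⊕_N Y` (whose continuous functionals are exactly the pairs of continuous
functionals on `X` and on `Y`, since `N` is equivalent to the product norm). -/
def NRelWeakInteriorPt (C : Set (X × Y)) (z : X × Y) : Prop :=
  ∃ (F : Finset (StrongDual ℝ X × StrongDual ℝ Y)) (δ : ℝ), 0 < δ ∧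
    {w ∈ NBall X Y N | ∀ g ∈ F,
      |g.1 w.1 + g.2 w.2 - (g.1 z.1 + g.2 z.2)| < δ} ⊆ C

end AbsoluteSum

/-!
Pick `β < 1` with `N(β, β) = β N(1,1) > 1`, a norm-one `g ∈ X*` and a unit vector `x` with
`g x = 1`. Points of the slices `S((±g, 0), 1 - β)` have `‖x'‖ > β`, so by monotonicity of the
absolute norm `N` they have `‖y'‖ < β`; hence so does every point of
`C = ½ S((g, 0), 1 - β) + ½ S((-g, 0), 1 - β)`, which contains `(x, 0)/2 + (-x, 0)/2 = 0`.
But every relative weak neighbourhood of `0` contains `(0, y)` with `‖y‖ = 1` and `y` in the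
common kernel of finitely many functionals on the infinite-dimensional `Y`, so it is not
contained in `C`.
-/

structure IsAbsoluteSeminorm (N : ℝ × ℝ → ℝ) : Prop where
  add_le : ∀ p q : ℝ × ℝ, N (p + q) ≤ N p + N q
  smul : ∀ (c : ℝ) (p : ℝ × ℝ), N (c • p) = |c| * N p
  abs : ∀ a b : ℝ, N (a, b) = N (|a|, |b|)

namespace IsAbsoluteSeminorm

variable {N : ℝ × ℝ → ℝ}

theorem comp_swap (hN : IsAbsoluteSeminorm N) : IsAbsoluteSeminorm (N ∘ Prod.swap) where
  add_le p q := hN.add_le p.swap q.swap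
  smul c p := hN.smul c p.swap
  abs a b := hN.abs b a

theorem smul_of_nonneg (hN : IsAbsoluteSeminorm N) {c : ℝ} (hc : 0 ≤ c) (p : ℝ × ℝ) :
    N (c • p) = c * N p := by
  rw [hN.smul, abs_of_nonneg hc]

theorem mono_fst (hN : IsAbsoluteSeminorm N) {a a' : ℝ} (c : ℝ) (ha : 0 ≤ a) (h : a ≤ a') :
    N (a, c) ≤ N (a', c) := by
  obtain rfl | ha' := (ha.trans h).eq_or_lt
  · rw [le_antisymm h ha]
  set s := (a' + a) / (2 * a')
  set t := (a' - a) / (2 * a')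
  have hs : 0 ≤ s := by positivity
  have ht : 0 ≤ t := div_nonneg (by linarith) (by positivity)
  have hst : s + t = 1 := by simp only [s, t]; field_simp; ring
  have hcomb : (a, c) = s • ((a', c) : ℝ × ℝ) + t • ((-a', c) : ℝ × ℝ) := by
    ext
    · simp only [Prod.fst_add, Prod.smul_fst, smul_eq_mul, s, t]; field_simp; ring
    · simp only [Prod.snd_add, Prod.smul_snd, smul_eq_mul, ← add_mul, hst, one_mul]
  calc N (a, c) ≤ N (s • ((a', c) : ℝ × ℝ)) + N (t • ((-a', c) : ℝ × ℝ)) :=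
        hcomb ▸ hN.add_le _ _
    _ = s * N (a', c) + t * N (a', c) := by
        rw [hN.smul_of_nonneg hs, hN.smul_of_nonneg ht, hN.abs (-a'), abs_neg, ← hN.abs]
    _ = N (a', c) := by rw [← add_mul, hst, one_mul]

theorem mono_snd (hN : IsAbsoluteSeminorm N) {b b' : ℝ} (c : ℝ) (hb : 0 ≤ b) (h : b ≤ b') :
    N (c, b) ≤ N (c, b') :=
  hN.comp_swap.mono_fst c hb h

theorem mono (hN : IsAbsoluteSeminorm N) {a a' b b' : ℝ} (ha : 0 ≤ a) (haa' : a ≤ a')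
    (hb : 0 ≤ b) (hbb' : b ≤ b') : N (a, b) ≤ N (a', b') :=
  (hN.mono_fst b ha haa').trans (hN.mono_snd a' hb hbb')

theorem apply_mk_zero (hN : IsAbsoluteSeminorm N) (h1 : N (1, 0) = 1) {a : ℝ} (ha : 0 ≤ a) :
    N (a, 0) = a := by
  simpa [h1] using hN.smul_of_nonneg ha (1, 0)

theorem apply_zero_mk (hN : IsAbsoluteSeminorm N) (h1 : N (0, 1) = 1) {b : ℝ} (hb : 0 ≤ b) :
    N (0, b) = b :=
  hN.comp_swap.apply_mk_zero h1 hb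

end IsAbsoluteSeminorm

theorem exists_ne_zero_forall_apply_eq_zero {K Y : Type*} [Field K] [AddCommGroup Y]
    [Module K Y] (hY : ¬ FiniteDimensional K Y) {ι : Type*} [Finite ι] (φ : ι → Y →ₗ[K] K) :
    ∃ y ≠ 0, ∀ i, φ i y = 0 := by
  by_contra! h
  refine hY (Module.Finite.of_injective (LinearMap.pi φ) ?_)
  rw [← LinearMap.ker_eq_bot, Submodule.eq_bot_iff]
  intro y hy
  by_contra hy0
  obtain ⟨i, hi⟩ := h y hy0
  exact hi (congr_fun hy i)

section AbsoluteSum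

variable {X Y : Type*} [NormedAddCommGroup X] [NormedAddCommGroup Y] {N : ℝ × ℝ → ℝ}

theorem mk_zero_mem_NBall (hN : IsAbsoluteSeminorm N) (h1 : N (1, 0) = 1) {x : X}
    (hx : ‖x‖ ≤ 1) : ((x, 0) : X × Y) ∈ NBall X Y N := by
  simpa [NBall, hN.apply_mk_zero h1 (norm_nonneg x)] using hx

theorem zero_mk_mem_NBall (hN : IsAbsoluteSeminorm N) (h1 : N (0, 1) = 1) {y : Y}
    (hy : ‖y‖ ≤ 1) : ((0, y) : X × Y) ∈ NBall X Y N := by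
  simpa [NBall, hN.apply_zero_mk h1 (norm_nonneg y)] using hy

theorem norm_fst_le_one_of_mem_NBall (hN : IsAbsoluteSeminorm N) (h1 : N (1, 0) = 1)
    {p : X × Y} (hp : p ∈ NBall X Y N) : ‖p.1‖ ≤ 1 := by
  have := hN.mono_snd ‖p.1‖ le_rfl (norm_nonneg p.2)
  rw [hN.apply_mk_zero h1 (norm_nonneg _)] at this
  exact this.trans hp

theorem norm_snd_lt_of_mem_NBall (hN : IsAbsoluteSeminorm N) {a b : ℝ} (ha : 0 ≤ a)
    (hb : 0 ≤ b) (hab : 1 < N (a, b)) {p : X × Y} (hp : p ∈ NBall X Y N) (hpa : a ≤ ‖p.1‖) :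
    ‖p.2‖ < b := by
  by_contra! hpb
  exact (hab.trans_le (hN.mono ha hpa hb hpb)).not_ge hp

variable [NormedSpace ℝ X] [NormedSpace ℝ Y]

theorem apply_le_norm_of_norm_le_one {g : StrongDual ℝ X} (hg : ‖g‖ ≤ 1) (x : X) :
    g x ≤ ‖x‖ :=
  (le_abs_self _).trans ((g.le_of_opNorm_le hg x).trans_eq (one_mul _))

theorem NDualSphere_mk_zero (hN : IsAbsoluteSeminorm N) (h1 : N (1, 0) = 1)
    {g : StrongDual ℝ X} (hg : ‖g‖ ≤ 1) {x : X} (hx : ‖x‖ ≤ 1) (hgx : g x = 1) :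
    NDualSphere X Y N (g, 0) := by
  refine ⟨fun p hp => ?_, fun ε hε => ⟨(x, 0), mk_zero_mem_NBall hN h1 hx, ?_⟩⟩
  · simpa using (apply_le_norm_of_norm_le_one hg p.1).trans
      (norm_fst_le_one_of_mem_NBall hN h1 hp)
  · simpa [hgx] using hε

theorem mk_zero_mem_NSlice (hN : IsAbsoluteSeminorm N) (h1 : N (1, 0) = 1)
    {g : StrongDual ℝ X} {α : ℝ} {x : X} (hx : ‖x‖ ≤ 1) (hgx : 1 - α < g x) :
    ((x, 0) : X × Y) ∈ NSlice X Y N (g, 0) α :=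
  ⟨mk_zero_mem_NBall hN h1 hx, by simpa using hgx⟩

theorem norm_snd_lt_of_mem_NSlice (hN : IsAbsoluteSeminorm N) {g : StrongDual ℝ X}
    (hg : ‖g‖ ≤ 1) {a b : ℝ} (ha : 0 ≤ a) (hb : 0 ≤ b) (hab : 1 < N (a, b))
    {p : X × Y} (hp : p ∈ NSlice X Y N (g, 0) (1 - a)) : ‖p.2‖ < b := by
  have hgp : a < g p.1 := by simpa using hp.2
  exact norm_snd_lt_of_mem_NBall hN ha hb hab hp.1
    (hgp.le.trans (apply_le_norm_of_norm_le_one hg p.1))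

theorem zero_mem_half_NSlice_add_half_NSlice (hN : IsAbsoluteSeminorm N) (h1 : N (1, 0) = 1)
    {g : StrongDual ℝ X} {x : X} (hx : ‖x‖ ≤ 1) (hgx : g x = 1) {α : ℝ} (hα : 0 < α) :
    (0 : X × Y) ∈ (1 / 2 : ℝ) • NSlice X Y N (g, 0) α + (1 / 2 : ℝ) • NSlice X Y N (-g, 0) α := by
  have hpos := mk_zero_mem_NSlice (Y := Y) hN h1 hx (g := g) (α := α)
    (by simpa [hgx] using sub_lt_self 1 hα)
  have hneg := mk_zero_mem_NSlice (Y := Y) hN h1 (g := -g) (α := α) (x := -x)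
    (by rwa [norm_neg]) (by simpa [hgx] using sub_lt_self 1 hα)
  convert Set.add_mem_add (Set.smul_mem_smul_set hpos) (Set.smul_mem_smul_set hneg) using 1
  ext <;> simp

theorem not_NRelWeakInteriorPt_zero (hN : IsAbsoluteSeminorm N) (h1 : N (0, 1) = 1)
    (hY : ¬ FiniteDimensional ℝ Y) {C : Set (X × Y)} (hC : ∀ p ∈ C, ‖p.2‖ < 1) :
    ¬ NRelWeakInteriorPt X Y N C 0 := by
  rintro ⟨F, δ, hδ, hsub⟩
  obtain ⟨y, hy0, hy⟩ := exists_ne_zero_forall_apply_eq_zero hY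
    fun g : F => ((g : StrongDual ℝ X × StrongDual ℝ Y).2 : Y →ₗ[ℝ] ℝ)
  have hu := norm_smul_inv_norm (𝕜 := ℝ) hy0
  have hmem : ((0, (‖y‖⁻¹ : ℝ) • y) : X × Y) ∈ C := by
    refine hsub ⟨zero_mk_mem_NBall hN h1 hu.le, fun g hg => ?_⟩
    have : g.2 y = 0 := hy ⟨g, hg⟩
    simpa [this] using hδ
  exact (hC _ hmem).ne hu

end AbsoluteSum

theorem exists_ccs_not_relWeaklyOpen_N_sum_general
    {X Y : Type*} [NormedAddCommGroup X] [NormedSpace ℝ X]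
    [NormedAddCommGroup Y] [NormedSpace ℝ Y]
    (hXinf : ¬ FiniteDimensional ℝ X) (hYinf : ¬ FiniteDimensional ℝ Y)
    (N : ℝ × ℝ → ℝ)
    (hNadd : ∀ p q : ℝ × ℝ, N (p + q) ≤ N p + N q)
    (hNsmul : ∀ (c : ℝ) (p : ℝ × ℝ), N (c • p) = |c| * N p)
    (habs : ∀ a b : ℝ, N (a, b) = N (|a|, |b|))
    (hnorm1 : N (1, 0) = 1) (hnorm2 : N (0, 1) = 1)
    (h11 : 1 < N (1, 1)) :
    ∃ (n : ℕ) (f : Fin n → StrongDual ℝ X × StrongDual ℝ Y)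
      (α lam : Fin n → ℝ), 0 < n ∧
      (∀ i, NDualSphere X Y N (f i)) ∧ (∀ i, 0 < α i) ∧ (∀ i, 0 ≤ lam i) ∧
      (∑ i, lam i) = 1 ∧
      ∃ z ∈ ∑ i, lam i • NSlice X Y N (f i) (α i),
        ¬ NRelWeakInteriorPt X Y N (∑ i, lam i • NSlice X Y N (f i) (α i)) z := by
  have hN : IsAbsoluteSeminorm N := ⟨hNadd, hNsmul, habs⟩
  have : Nontrivial X := not_subsingleton_iff_nontrivial.mp fun _ => hXinf inferInstance
  obtain ⟨x, hx⟩ := exists_norm_eq X zero_le_one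
  obtain ⟨g, hg, hgx⟩ := exists_dual_vector' ℝ x
  rw [hx] at hgx
  obtain ⟨β, hβm, hβ1⟩ := exists_between (inv_lt_one_of_one_lt₀ h11)
  have hβ0 : 0 ≤ β := (inv_pos.mpr (one_pos.trans h11)).le.trans hβm.le
  have hNβ : 1 < N (β, β) := by
    have hββ : ((β, β) : ℝ × ℝ) = β • (1, 1) := by simp
    rw [hββ, hN.smul_of_nonneg hβ0]
    exact (inv_lt_iff_one_lt_mul₀ (one_pos.trans h11)).mp hβm
  have hslice : ∀ h : StrongDual ℝ X, ‖h‖ ≤ 1 →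
      NSlice X Y N (h, 0) (1 - β) ⊆ LinearMap.snd ℝ X Y ⁻¹' Metric.ball 0 β :=
    fun h hh p hp => mem_ball_zero_iff.mpr <|
      norm_snd_lt_of_mem_NSlice hN hh hβ0 hβ0 hNβ hp
  refine ⟨2, ![(g, 0), (-g, 0)], ![1 - β, 1 - β], ![1 / 2, 1 / 2], two_pos,
    Fin.forall_fin_two.mpr ⟨?_, ?_⟩, Fin.forall_fin_two.mpr ⟨sub_pos.mpr hβ1, sub_pos.mpr hβ1⟩,
    Fin.forall_fin_two.mpr ⟨by norm_num, by norm_num⟩, by norm_num, ?_⟩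
  · exact NDualSphere_mk_zero hN hnorm1 hg.le hx.le hgx
  · exact NDualSphere_mk_zero hN hnorm1 (norm_neg g ▸ hg.le) (norm_neg x ▸ hx.le) (by simp [hgx])
  simp only [Fin.sum_univ_two, Matrix.cons_val_zero, Matrix.cons_val_one]
  refine ⟨0, zero_mem_half_NSlice_add_half_NSlice hN hnorm1 hx.le hgx (sub_pos.mpr hβ1),
    not_NRelWeakInteriorPt_zero hN hnorm2 hYinf fun p hp => ?_⟩
  have hp' := ((convex_ball (0 : Y) β).linear_preimage (LinearMap.snd ℝ X Y)).set_combo_subset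
    (by norm_num) (by norm_num) (by norm_num)
    (Set.add_subset_add (Set.smul_set_mono (hslice g hg.le))
      (Set.smul_set_mono (hslice (-g) (norm_neg g ▸ hg.le))) hp)
  exact (mem_ball_zero_iff.mp hp').trans hβ1

/-- If `N` is an absolute normalized norm on `ℝ²` with `N(1,1) > 1`,
then the closed unit ball of `X ⊕_N Y` admits a finite convex combination of slices
which is not open in the relative weak topology of the closed unit ball. -/
theorem exists_ccs_not_relWeaklyOpen_N_sum
    {X Y : Type*} [NormedAddCommGroup X] [NormedSpace ℝ X] [CompleteSpace X]
    [NormedAddCommGroup Y] [NormedSpace ℝ Y] [CompleteSpace Y]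
    (hXinf : ¬ FiniteDimensional ℝ X) (hYinf : ¬ FiniteDimensional ℝ Y)
    (N : ℝ × ℝ → ℝ)
    (hN0 : ∀ p : ℝ × ℝ, N p = 0 ↔ p = 0)
    (hNadd : ∀ p q : ℝ × ℝ, N (p + q) ≤ N p + N q)
    (hNsmul : ∀ (c : ℝ) (p : ℝ × ℝ), N (c • p) = |c| * N p)
    (habs : ∀ a b : ℝ, N (a, b) = N (|a|, |b|))
    (hnorm1 : N (1, 0) = 1) (hnorm2 : N (0, 1) = 1)
    (h11 : 1 < N (1, 1)) :
    ∃ (n : ℕ) (f : Fin n → StrongDual ℝ X × StrongDual ℝ Y)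
      (α lam : Fin n → ℝ), 0 < n ∧
      (∀ i, NDualSphere X Y N (f i)) ∧ (∀ i, 0 < α i) ∧ (∀ i, 0 ≤ lam i) ∧
      (∑ i, lam i) = 1 ∧
      ∃ z ∈ ∑ i, lam i • NSlice X Y N (f i) (α i),
        ¬ NRelWeakInteriorPt X Y N (∑ i, lam i • NSlice X Y N (f i) (α i)) z :=
  exists_ccs_not_relWeaklyOpen_N_sum_general hXinf hYinf N hNadd hNsmul habs hnorm1 hnorm2 h11
end
end

section
/- Let X and Y be infinite-dimensional Banach spaces, each with the property that every finite convex combination of slices of its closed unit ball intersects its unit sphere, and let N be an absolute normalized norm on ℝ² with the positive strong diameter 2 property. Then every finite convex combination of slices of the closed unit ball of X ⊕_N Y intersects the unit sphere of X ⊕_N Y. -/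
open scoped Pointwise

noncomputable section

/-- The slice `S(f, α)` of the closed unit ball of `Z`. -/
def ballSlice (Z : Type*) [NormedAddCommGroup Z] [NormedSpace ℝ Z]
    (f : StrongDual ℝ Z) (α : ℝ) : Set Z :=
  {z ∈ Metric.closedBall (0 : Z) 1 | 1 - α < f z}

/-- `C` is a finite convex combination of slices of the closed unit ball of `Z`. -/
def IsCCS (Z : Type*) [NormedAddCommGroup Z] [NormedSpace ℝ Z] (C : Set Z) : Prop :=
  ∃ (n : ℕ) (f : Fin n → StrongDual ℝ Z) (α lam : Fin n → ℝ),
    0 < n ∧ (∀ i, ‖f i‖ = 1) ∧ (∀ i, 0 < α i) ∧ (∀ i, 0 ≤ lam i) ∧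
    (∑ i, lam i) = 1 ∧ C = ∑ i, lam i • ballSlice Z (f i) (α i)

/-- `z` is an interior point of `C` in the relative weak topology of the closed
unit ball of `Z`: some basic weak neighbourhood of `z`, intersected with the
closed unit ball, is contained in `C`. -/
def RelWeakInteriorPt (Z : Type*) [NormedAddCommGroup Z] [NormedSpace ℝ Z]
    (C : Set Z) (z : Z) : Prop :=
  ∃ (F : Finset (StrongDual ℝ Z)) (δ : ℝ), 0 < δ ∧
    {w ∈ Metric.closedBall (0 : Z) 1 | ∀ f ∈ F, |f w - f z| < δ} ⊆ C


/-- `C` is relatively weakly open in the closed unit ball of `Z`. -/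
def RelWeaklyOpen (Z : Type*) [NormedAddCommGroup Z] [NormedSpace ℝ Z] (C : Set Z) : Prop :=
  ∀ z ∈ C, RelWeakInteriorPt Z C z

/-- (P1): every finite convex combination of slices of the closed unit ball of `Z`
is relatively weakly open in the closed unit ball. -/
def PropP1 (Z : Type*) [NormedAddCommGroup Z] [NormedSpace ℝ Z] : Prop :=
  ∀ C : Set Z, IsCCS Z C → RelWeaklyOpen Z C

/-- (P2): every finite convex combination of slices of the closed unit ball of `Z`
has nonempty interior in the relative weak topology of the closed unit ball. -/
def PropP2 (Z : Type*) [NormedAddCommGroup Z] [NormedSpace ℝ Z] : Prop :=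
  ∀ C : Set Z, IsCCS Z C → ∃ z ∈ C, RelWeakInteriorPt Z C z

/-- (P3): every finite convex combination of slices of the closed unit ball of `Z`
intersects the unit sphere of `Z`. -/
def PropP3 (Z : Type*) [NormedAddCommGroup Z] [NormedSpace ℝ Z] : Prop :=
  ∀ C : Set Z, IsCCS Z C → ∃ z ∈ C, ‖z‖ = 1
/-- An absolute normalized norm `N` on `ℝ²` has the positive strong diameter 2
property: for positive norm-one functionals `fᵢ` on `(ℝ², N)`, `αᵢ > 0` and convex
coefficients `λᵢ`, there are positive points `(aᵢ, bᵢ)` of the slices `S(fᵢ, αᵢ)` of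
the unit ball of `(ℝ², N)` with `N(Σᵢ λᵢ (aᵢ, bᵢ)) = 1`. -/
def PositiveSD2P (N : ℝ × ℝ → ℝ) : Prop :=
  ∀ (n : ℕ) (f : Fin n → ℝ × ℝ) (α lam : Fin n → ℝ),
    (∀ i, 0 ≤ (f i).1 ∧ 0 ≤ (f i).2) →
    (∀ i, (∀ a b : ℝ, N (a, b) ≤ 1 → (f i).1 * a + (f i).2 * b ≤ 1) ∧
      ∀ ε > 0, ∃ a b : ℝ, N (a, b) ≤ 1 ∧ 1 - ε < (f i).1 * a + (f i).2 * b) →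
    (∀ i, 0 < α i) → (∀ i, 0 ≤ lam i) → (∑ i, lam i) = 1 →
    ∃ a b : Fin n → ℝ,
      (∀ i, 0 ≤ a i ∧ 0 ≤ b i ∧ N (a i, b i) ≤ 1 ∧
        1 - α i < (f i).1 * a i + (f i).2 * b i) ∧
      N (∑ i, lam i * a i, ∑ i, lam i * b i) = 1


/-!
A norm-one functional `f = (f₁, f₂)` on `X ⊕_N Y` yields the positive norm-one functional
`(‖f₁‖, ‖f₂‖)` on `(ℝ², N)`. The positive strong diameter 2 property of `N` gives positive
`(aᵢ, bᵢ)` in the slices of these functionals with `N (∑ λᵢ aᵢ, ∑ λᵢ bᵢ) = 1`. The property of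
`X`, applied to the normalized slices of the `fᵢ₁` with weights `λᵢ aᵢ`, gives `xᵢ` almost
norming `fᵢ₁` with `‖∑ λᵢ aᵢ xᵢ‖ = ∑ λᵢ aᵢ`, and likewise `yᵢ ∈ Y`. Since an absolute norm is
monotone in the absolute values of the coordinates, `(aᵢ xᵢ, bᵢ yᵢ)` lies in the `i`-th slice,
and `∑ λᵢ (aᵢ xᵢ, bᵢ yᵢ)` has norm `N (∑ λᵢ aᵢ, ∑ λᵢ bᵢ) = 1`.
-/

open Set

def AbsMonotone (N : ℝ × ℝ → ℝ) : Prop :=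
  ∀ ⦃a a' b b' : ℝ⦄, |a| ≤ |a'| → |b| ≤ |b'| → N (a, b) ≤ N (a', b')

theorem absMonotone_of_absolute {N : ℝ × ℝ → ℝ}
    (hNadd : ∀ p q : ℝ × ℝ, N (p + q) ≤ N p + N q)
    (hNsmul : ∀ (c : ℝ) (p : ℝ × ℝ), N (c • p) = |c| * N p)
    (habs : ∀ a b : ℝ, N (a, b) = N (|a|, |b|)) : AbsMonotone N := by
  have hconv : ConvexOn ℝ univ N := (Seminorm.of N hNadd hNsmul).convexOn
  intro a a' b b' ha hb
  have hfst : N (a, b) ≤ N (|a'|, b) := by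
    have hmem : (a, b) ∈ segment ℝ (-|a'|, b) (|a'|, b) := by
      rw [← Prod.image_mk_segment_left, segment_eq_Icc (by simp)]
      exact ⟨a, abs_le.1 ha, rfl⟩
    calc N (a, b) ≤ max (N (-|a'|, b)) (N (|a'|, b)) :=
          hconv.le_max_of_mem_segment trivial trivial hmem
      _ = N (|a'|, b) := by rw [habs (-|a'|), habs |a'|, abs_neg, max_self]
  have hsnd : N (|a'|, b) ≤ N (|a'|, |b'|) := by
    have hmem : (|a'|, b) ∈ segment ℝ (|a'|, -|b'|) (|a'|, |b'|) := by
      rw [← Prod.image_mk_segment_right, segment_eq_Icc (by simp)]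
      exact ⟨b, abs_le.1 hb, rfl⟩
    calc N (|a'|, b) ≤ max (N (|a'|, -|b'|)) (N (|a'|, |b'|)) :=
          hconv.le_max_of_mem_segment trivial trivial hmem
      _ = N (|a'|, |b'|) := by rw [habs |a'| (-|b'|)]; simp only [abs_neg, abs_abs, max_self]
  exact hfst.trans (hsnd.trans (habs a' b').symm.le)

/-- The pair `g` stands for the functional `(a, b) ↦ g.1 * a + g.2 * b` on `(ℝ², N)`. -/
def IsNormOneFunctional (N : ℝ × ℝ → ℝ) (g : ℝ × ℝ) : Prop :=
  (∀ a b : ℝ, N (a, b) ≤ 1 → g.1 * a + g.2 * b ≤ 1) ∧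
    ∀ ε > 0, ∃ a b : ℝ, N (a, b) ≤ 1 ∧ 1 - ε < g.1 * a + g.2 * b

section StrongDual

variable {X : Type*} [NormedAddCommGroup X] [NormedSpace ℝ X]

theorem StrongDual.norm_le_of_apply_le {g : StrongDual ℝ X} {C : ℝ}
    (h : ∀ x, ‖x‖ ≤ 1 → g x ≤ C) : ‖g‖ ≤ C := by
  refine ContinuousLinearMap.opNorm_le_of_unit_norm (by simpa using h 0 (by simp))
    fun x hx => abs_le.2 ⟨?_, h x hx.le⟩
  have := h (-x) (by simp [hx])
  rw [map_neg] at this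
  linarith

theorem StrongDual.mul_norm_add_mul_norm_le {Y : Type*} [NormedAddCommGroup Y]
    [NormedSpace ℝ Y] {g : StrongDual ℝ X} {h : StrongDual ℝ Y} {s t C : ℝ} (hs : 0 ≤ s)
    (ht : 0 ≤ t) (hle : ∀ x y, ‖x‖ ≤ 1 → ‖y‖ ≤ 1 → s * g x + t * h y ≤ C) :
    s * ‖g‖ + t * ‖h‖ ≤ C := by
  have hsg : ∀ y, ‖y‖ ≤ 1 → s * ‖g‖ + t * h y ≤ C := fun y hy => by
    have := StrongDual.norm_le_of_apply_le (g := s • g) (C := C - t * h y)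
      fun x hx => by simpa using le_sub_iff_add_le.2 (hle x y hx hy)
    rw [norm_smul, Real.norm_of_nonneg hs] at this
    linarith
  have := StrongDual.norm_le_of_apply_le (g := t • h) (C := C - s * ‖g‖)
    fun y hy => by simpa using le_sub_iff_add_le'.2 (hsg y hy)
  rw [norm_smul, Real.norm_of_nonneg ht] at this
  linarith

theorem StrongDual.exists_lt_apply_of_lt_norm (g : StrongDual ℝ X) {r : ℝ} (hr : r < ‖g‖) :
    ∃ x : X, ‖x‖ < 1 ∧ r < g x := by
  obtain ⟨x, hx, hrx⟩ := g.exists_lt_apply_of_lt_opNorm hr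
  rcases lt_abs.1 hrx with h | h
  · exact ⟨x, hx, h⟩
  · exact ⟨-x, by simpa using hx, by simpa using h⟩

theorem ballSlice_nonempty {φ : StrongDual ℝ X} (hφ : ‖φ‖ = 1) {β : ℝ} (hβ : 0 < β) :
    (ballSlice X φ β).Nonempty := by
  obtain ⟨x, hx, hφx⟩ := φ.exists_lt_apply_of_lt_norm (show 1 - β < ‖φ‖ by linarith)
  exact ⟨x, mem_closedBall_zero_iff.2 hx.le, hφx⟩

theorem exists_norm_eq_one_ballSlice_subset [Nontrivial X] (g : StrongDual ℝ X) (β : ℝ) :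
    ∃ φ : StrongDual ℝ X, ‖φ‖ = 1 ∧ ballSlice X φ β ⊆ {x | ‖g‖ * (1 - β) ≤ g x} := by
  rcases eq_or_ne g 0 with rfl | hg
  · obtain ⟨φ, hφ, -⟩ := exists_dual_vector' ℝ (0 : X)
    exact ⟨φ, hφ, fun x _ => by simp⟩
  have hgpos : 0 < ‖g‖ := norm_pos_iff.2 hg
  refine ⟨‖g‖⁻¹ • g, by rw [norm_smul, norm_inv, norm_norm, inv_mul_cancel₀ hgpos.ne'],
    fun x hx => ?_⟩
  have h : 1 - β < ‖g‖⁻¹ * g x := hx.2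
  rw [lt_inv_mul_iff₀ hgpos] at h
  exact h.le

theorem PropP3.exists_mem_ballSlice_norm_sum_eq_one (hX : PropP3 X) {n : ℕ} (hn : 0 < n)
    {φ : Fin n → StrongDual ℝ X} (hφ : ∀ i, ‖φ i‖ = 1) {β : Fin n → ℝ} (hβ : ∀ i, 0 < β i)
    {lam : Fin n → ℝ} (hlam : ∀ i, 0 ≤ lam i) (hsum : ∑ i, lam i = 1) :
    ∃ x : Fin n → X, (∀ i, x i ∈ ballSlice X (φ i) (β i)) ∧ ‖∑ i, lam i • x i‖ = 1 := by
  obtain ⟨u, hu, hu1⟩ := hX _ ⟨n, φ, β, lam, hn, hφ, hβ, hlam, hsum, rfl⟩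
  obtain ⟨w, hw, rfl⟩ := (mem_fintype_sum _ u).1 hu
  choose x hx hxw using fun i => mem_smul_set.1 (hw i)
  exact ⟨x, hx, by simpa only [hxw] using hu1⟩

theorem PropP3.exists_mem_ballSlice_norm_sum_eq (hX : PropP3 X) {n : ℕ} (hn : 0 < n)
    {φ : Fin n → StrongDual ℝ X} (hφ : ∀ i, ‖φ i‖ = 1) {β : Fin n → ℝ} (hβ : ∀ i, 0 < β i)
    {c : Fin n → ℝ} (hc : ∀ i, 0 ≤ c i) :
    ∃ x : Fin n → X, (∀ i, x i ∈ ballSlice X (φ i) (β i)) ∧ ‖∑ i, c i • x i‖ = ∑ i, c i := by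
  set s := ∑ i, c i
  rcases (Finset.sum_nonneg fun i _ => hc i : 0 ≤ s).eq_or_lt with hs | (hs : 0 < s)
  · choose x hx using fun i => ballSlice_nonempty (hφ i) (hβ i)
    have hc0 : ∀ i, c i = 0 := fun i =>
      (Finset.sum_eq_zero_iff_of_nonneg fun j _ => hc j).1 hs.symm i (Finset.mem_univ i)
    exact ⟨x, hx, by simp [hc0, s]⟩
  obtain ⟨x, hx, hx1⟩ := hX.exists_mem_ballSlice_norm_sum_eq_one hn hφ hβ
    (lam := fun i => c i / s) (fun i => div_nonneg (hc i) hs.le)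
    (by rw [← Finset.sum_div, div_self hs.ne'])
  have hrescale : ∑ i, c i • x i = s • ∑ i, (c i / s) • x i := by
    simp only [Finset.smul_sum, smul_smul, mul_div_cancel₀ _ hs.ne']
  refine ⟨x, hx, ?_⟩
  rw [hrescale, norm_smul, hx1, Real.norm_of_nonneg hs.le, mul_one]

theorem PropP3.exists_norm_sum_smul_eq [Nontrivial X] (hX : PropP3 X) {n : ℕ} (hn : 0 < n)
    (g : Fin n → StrongDual ℝ X) {β : Fin n → ℝ} (hβ : ∀ i, 0 < β i)
    {c : Fin n → ℝ} (hc : ∀ i, 0 ≤ c i) :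
    ∃ x : Fin n → X, (∀ i, ‖x i‖ ≤ 1 ∧ ‖g i‖ * (1 - β i) ≤ g i (x i)) ∧
      ‖∑ i, c i • x i‖ = ∑ i, c i := by
  choose φ hφ hφg using fun i => exists_norm_eq_one_ballSlice_subset (g i) (β i)
  obtain ⟨x, hx, hxc⟩ := hX.exists_mem_ballSlice_norm_sum_eq hn hφ hβ hc
  exact ⟨x, fun i => ⟨mem_closedBall_zero_iff.1 (hx i).1, hφg i (hx i)⟩, hxc⟩

end StrongDual

section AbsoluteSum

variable {X Y : Type*} [NormedAddCommGroup X] [NormedSpace ℝ X]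
  [NormedAddCommGroup Y] [NormedSpace ℝ Y] {N : ℝ × ℝ → ℝ}

theorem smul_mem_NBall (hN : AbsMonotone N) {x : X} {y : Y} (hx : ‖x‖ ≤ 1) (hy : ‖y‖ ≤ 1)
    {a b : ℝ} (hab : N (a, b) ≤ 1) : (a • x, b • y) ∈ NBall X Y N := by
  refine le_trans (hN ?_ ?_) hab
  · simpa only [norm_smul, Real.norm_eq_abs, abs_mul, abs_abs, abs_norm] using
      mul_le_of_le_one_right (abs_nonneg a) hx
  · simpa only [norm_smul, Real.norm_eq_abs, abs_mul, abs_abs, abs_norm] using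
      mul_le_of_le_one_right (abs_nonneg b) hy

theorem NDualSphere.isNormOneFunctional_norm (hN : AbsMonotone N)
    {f : StrongDual ℝ X × StrongDual ℝ Y} (hf : NDualSphere X Y N f) :
    IsNormOneFunctional N (‖f.1‖, ‖f.2‖) := by
  constructor
  · intro a b hab
    have hab' : N (|a|, |b|) ≤ 1 := le_trans (hN (by simp) (by simp)) hab
    have := StrongDual.mul_norm_add_mul_norm_le (abs_nonneg a) (abs_nonneg b)
      fun x y hx hy => by simpa using hf.1 _ (smul_mem_NBall hN hx hy hab')
    linarith [mul_le_mul_of_nonneg_left (le_abs_self a) (norm_nonneg f.1),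
      mul_le_mul_of_nonneg_left (le_abs_self b) (norm_nonneg f.2)]
  · intro ε hε
    obtain ⟨p, hp, hfp⟩ := hf.2 ε hε
    exact ⟨‖p.1‖, ‖p.2‖, hp, hfp.trans_le (add_le_add ((le_abs_self _).trans (f.1.le_opNorm p.1))
      ((le_abs_self _).trans (f.2.le_opNorm p.2)))⟩

theorem smul_mem_NSlice (hN : AbsMonotone N) {f : StrongDual ℝ X × StrongDual ℝ Y}
    {x : X} {y : Y} (hx : ‖x‖ ≤ 1) (hy : ‖y‖ ≤ 1) {β : ℝ} (hβ : 0 ≤ β)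
    (hfx : ‖f.1‖ * (1 - β) ≤ f.1 x) (hfy : ‖f.2‖ * (1 - β) ≤ f.2 y)
    {a b γ : ℝ} (ha : 0 ≤ a) (hb : 0 ≤ b) (hab : N (a, b) ≤ 1)
    (hle : ‖f.1‖ * a + ‖f.2‖ * b ≤ 1) (hlt : 1 - γ < ‖f.1‖ * a + ‖f.2‖ * b) :
    (a • x, b • y) ∈ NSlice X Y N f (γ + β) := by
  refine ⟨smul_mem_NBall hN hx hy hab, ?_⟩
  simp only [map_smul, smul_eq_mul]
  nlinarith [mul_le_mul_of_nonneg_left hfx ha, mul_le_mul_of_nonneg_left hfy hb]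

end AbsoluteSum

theorem ccs_meets_sphere_N_sum_general
    {X Y : Type*} [NormedAddCommGroup X] [NormedSpace ℝ X]
    [NormedAddCommGroup Y] [NormedSpace ℝ Y]
    (hXinf : ¬ FiniteDimensional ℝ X) (hYinf : ¬ FiniteDimensional ℝ Y)
    (hX : PropP3 X) (hY : PropP3 Y)
    (N : ℝ × ℝ → ℝ)
    (hNadd : ∀ p q : ℝ × ℝ, N (p + q) ≤ N p + N q)
    (hNsmul : ∀ (c : ℝ) (p : ℝ × ℝ), N (c • p) = |c| * N p)
    (habs : ∀ a b : ℝ, N (a, b) = N (|a|, |b|))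
    (hsd2p : PositiveSD2P N)
    (n : ℕ) (hn : 0 < n)
    (f : Fin n → StrongDual ℝ X × StrongDual ℝ Y)
    (hf : ∀ i, NDualSphere X Y N (f i))
    (α : Fin n → ℝ) (hα : ∀ i, 0 < α i)
    (lam : Fin n → ℝ) (hlam : ∀ i, 0 ≤ lam i) (hsum : (∑ i, lam i) = 1) :
    ∃ z ∈ ∑ i, lam i • NSlice X Y N (f i) (α i), N (‖z.1‖, ‖z.2‖) = 1 := by
  have : Nontrivial X := not_subsingleton_iff_nontrivial.1 fun _ => hXinf inferInstance
  have : Nontrivial Y := not_subsingleton_iff_nontrivial.1 fun _ => hYinf inferInstance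
  have hN := absMonotone_of_absolute hNadd hNsmul habs
  have hg i := (hf i).isNormOneFunctional_norm hN
  have hα2 i := half_pos (hα i)
  obtain ⟨a, b, hab, hNab⟩ := hsd2p n (fun i => (‖(f i).1‖, ‖(f i).2‖)) (fun i => α i / 2) lam
    (fun i => ⟨norm_nonneg _, norm_nonneg _⟩) hg hα2 hlam hsum
  obtain ⟨x, hx, hxnorm⟩ := hX.exists_norm_sum_smul_eq hn (fun i => (f i).1) hα2
    (c := fun i => lam i * a i) fun i => mul_nonneg (hlam i) (hab i).1
  obtain ⟨y, hy, hynorm⟩ := hY.exists_norm_sum_smul_eq hn (fun i => (f i).2) hα2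
    (c := fun i => lam i * b i) fun i => mul_nonneg (hlam i) (hab i).2.1
  have hmem i : (a i • x i, b i • y i) ∈ NSlice X Y N (f i) (α i) := by
    obtain ⟨ha, hb, hN1, hlt⟩ := hab i
    simpa only [add_halves] using smul_mem_NSlice hN (hx i).1 (hy i).1 (hα2 i).le (hx i).2
      (hy i).2 ha hb hN1 ((hg i).1 _ _ hN1) hlt
  refine ⟨∑ i, lam i • (a i • x i, b i • y i),
    finsetSum_mem_finsetSum _ _ _ fun i _ => smul_mem_smul_set (hmem i), ?_⟩
  simpa only [Prod.fst_sum, Prod.snd_sum, Prod.smul_mk, smul_smul, hxnorm, hynorm] using hNab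

/-- If the infinite-dimensional Banach spaces `X` and `Y` both have
the property that every finite convex combination of slices of the closed unit ball
meets the unit sphere, and `N` is an absolute normalized norm on `ℝ²` with the
positive strong diameter 2 property, then every finite convex combination of slices
of the closed unit ball of `X ⊕_N Y` meets the unit sphere of `X ⊕_N Y`. -/
theorem ccs_meets_sphere_N_sum
    {X Y : Type*} [NormedAddCommGroup X] [NormedSpace ℝ X] [CompleteSpace X]
    [NormedAddCommGroup Y] [NormedSpace ℝ Y] [CompleteSpace Y]
    (hXinf : ¬ FiniteDimensional ℝ X) (hYinf : ¬ FiniteDimensional ℝ Y)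
    (hX : PropP3 X) (hY : PropP3 Y)
    (N : ℝ × ℝ → ℝ)
    (hN0 : ∀ p : ℝ × ℝ, N p = 0 ↔ p = 0)
    (hNadd : ∀ p q : ℝ × ℝ, N (p + q) ≤ N p + N q)
    (hNsmul : ∀ (c : ℝ) (p : ℝ × ℝ), N (c • p) = |c| * N p)
    (habs : ∀ a b : ℝ, N (a, b) = N (|a|, |b|))
    (hnorm1 : N (1, 0) = 1) (hnorm2 : N (0, 1) = 1)
    (hsd2p : PositiveSD2P N)
    (n : ℕ) (hn : 0 < n)
    (f : Fin n → StrongDual ℝ X × StrongDual ℝ Y)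
    (hf : ∀ i, NDualSphere X Y N (f i))
    (α : Fin n → ℝ) (hα : ∀ i, 0 < α i)
    (lam : Fin n → ℝ) (hlam : ∀ i, 0 ≤ lam i) (hsum : (∑ i, lam i) = 1) :
    ∃ z ∈ ∑ i, lam i • NSlice X Y N (f i) (α i), N (‖z.1‖, ‖z.2‖) = 1 :=
  ccs_meets_sphere_N_sum_general hXinf hYinf hX hY N hNadd hNsmul habs hsd2p n hn f hf α hα lam hlam
    hsum
end
end

section
/- Let X and Y be Banach spaces, each with the property that every norm-one element in a finite convex combination of slices of its closed unit ball is an interior point of that combination in the relative weak topology of the closed unit ball. Then the 1-sum X ⊕₁ Y (with norm ‖(x,y)‖ = ‖x‖ + ‖y‖) also has this property. -/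
open scoped Pointwise

noncomputable section

/-- Every norm-one element of a finite convex combination of slices of the closed
unit ball is an interior point of that combination in the relative weak topology. -/
def NormOneCCSInteriorProp (Z : Type*) [NormedAddCommGroup Z] [NormedSpace ℝ Z] : Prop :=
  ∀ C : Set Z, IsCCS Z C → ∀ z ∈ C, ‖z‖ = 1 → RelWeakInteriorPt Z C z

/-!
Write `z = ∑ λᵢ sᵢ` with `sᵢ = (xᵢ, yᵢ)` in the slices. As `‖z‖ = 1` and the norm is the
`ℓ¹`-norm, `∑ λᵢ ‖xᵢ‖ = ‖x‖` and `∑ λᵢ ‖yᵢ‖ = ‖y‖`. If `x ≠ 0`, then `x / ‖x‖` is the convex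
combination of the `xᵢ / ‖xᵢ‖` with weights `λᵢ ‖xᵢ‖ / ‖x‖`, and each `xᵢ / ‖xᵢ‖` lies in a slice
on which the `X`-part of `fᵢ` drops by little. The property of `X` decomposes every point of a
relative weak neighbourhood of `x / ‖x‖` along these slices; scaling back, every `u` weakly close
to `x` with `‖u‖ ≈ ‖x‖` splits into pieces `uᵢ` with `‖uᵢ‖ ≈ ‖xᵢ‖`, and likewise on `Y`.
For `w = (u, v)` in the unit ball, norming functionals bound `‖u‖` and `‖v‖` from below, and
`‖u‖ + ‖v‖ ≤ 1 = ‖x‖ + ‖y‖` then bounds them from above. The pieces `(uᵢ, vᵢ)` may leave the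
unit ball slightly; shrinking them into it and spreading the small remainder over the slack
`1 - ‖·‖` of the pieces keeps them in the slices.
-/

open Filter Topology

section Generic

variable {Z : Type*} [NormedAddCommGroup Z] [NormedSpace ℝ Z]

lemma mem_sum_smul_set_iff {ι 𝕜 M : Type*} [Fintype ι] [AddCommMonoid M] [SMul 𝕜 M]
    {c : ι → 𝕜} {S : ι → Set M} {z : M} :
    z ∈ ∑ i, c i • S i ↔ ∃ p : ι → M, (∀ i, p i ∈ S i) ∧ ∑ i, c i • p i = z := by
  simp only [Set.mem_finsetSum, Finset.mem_univ, forall_const, Set.mem_smul_set]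
  constructor
  · rintro ⟨q, hq, rfl⟩
    choose p hp hpq using fun i => hq (i := i)
    exact ⟨p, hp, Finset.sum_congr rfl fun i _ => hpq i⟩
  · rintro ⟨p, hp, rfl⟩
    exact ⟨fun i => c i • p i, fun {i} => ⟨p i, hp i, rfl⟩, rfl⟩

lemma sum_smul_mem_sum_smul_set {ι 𝕜 M : Type*} [Fintype ι] [Semiring 𝕜] [AddCommMonoid M]
    [Module 𝕜 M] {c : ι → 𝕜} {S : ι → Set M} {p q : ι → M} (hq : ∀ i, q i ∈ S i)
    (hp : ∀ i, c i ≠ 0 → p i ∈ S i) : ∑ i, c i • p i ∈ ∑ i, c i • S i := by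
  classical
  refine mem_sum_smul_set_iff.2 ⟨fun i => if c i = 0 then q i else p i, fun i => ?_, ?_⟩
  · by_cases h : c i = 0
    · simpa [h] using hq i
    · simpa [h] using hp i h
  · exact Finset.sum_congr rfl fun i _ => by by_cases h : c i = 0 <;> simp [h]

lemma norm_sum_smul_le {ι : Type*} [Fintype ι] {lam : ι → ℝ} (hlam : ∀ i, 0 ≤ lam i)
    (v : ι → Z) : ‖∑ i, lam i • v i‖ ≤ ∑ i, lam i * ‖v i‖ := by
  grw [norm_sum_le]
  simp_rw [norm_smul, Real.norm_of_nonneg (hlam _)]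
  exact le_rfl

lemma norm_inv_norm_smul_le_one (v : Z) : ‖‖v‖⁻¹ • v‖ ≤ 1 := by
  rw [norm_smul, norm_inv, norm_norm]
  exact inv_mul_le_one

lemma norm_inv_norm_smul_of_ne_zero {v : Z} (hv : v ≠ 0) : ‖‖v‖⁻¹ • v‖ = 1 := by
  simpa using norm_smul_inv_norm (𝕜 := ℝ) hv

lemma abs_apply_le_norm_of_norm_le_one {φ : StrongDual ℝ Z} (hφ : ‖φ‖ ≤ 1) (x : Z) :
    |φ x| ≤ ‖x‖ := by
  simpa using φ.le_of_opNorm_le hφ x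

lemma sub_lt_norm_of_abs_sub_lt {φ : StrongDual ℝ Z} (hφ : ‖φ‖ ≤ 1) {x u : Z} (hφx : φ x = ‖x‖)
    {δ : ℝ} (h : |φ u - φ x| < δ) : ‖x‖ - δ < ‖u‖ := by
  have := (le_abs_self _).trans (abs_apply_le_norm_of_norm_le_one hφ u)
  linarith [(abs_lt.1 h).1]

lemma mem_ballSlice_iff {f : StrongDual ℝ Z} {α : ℝ} {z : Z} :
    z ∈ ballSlice Z f α ↔ ‖z‖ ≤ 1 ∧ 1 - α < f z :=
  and_congr_left' mem_closedBall_zero_iff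

lemma exists_pos_forall_lt {ι : Type*} [Finite ι] (p : ι → Prop) {a : ι → ℝ}
    (ha : ∀ i, p i → 0 < a i) : ∃ ε > 0, ∀ i, p i → ε < a i := by
  refine (eventually_all.2 fun i => ?_).exists_gt
  by_cases hi : p i
  · exact (eventually_lt_nhds (ha i hi)).mono fun _ h _ => h
  · exact .of_forall fun _ h => absurd h hi

end Generic

section Redistribution

variable {Z : Type*} [NormedAddCommGroup Z] [NormedSpace ℝ Z] {ι : Type*} [Fintype ι]

lemma exists_norm_eq_min_one (w : Z) : ∃ v : Z, ‖v‖ = min ‖w‖ 1 ∧ ‖v‖ + ‖w - v‖ = ‖w‖ := by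
  rcases le_or_gt ‖w‖ 1 with hw | hw
  · exact ⟨w, (min_eq_left hw).symm, by simp⟩
  · have hw0 : ‖w‖ ≠ 0 := by positivity
    have h1 := norm_inv_norm_smul_of_ne_zero (norm_ne_zero_iff.1 hw0)
    refine ⟨‖w‖⁻¹ • w, by rw [h1, min_eq_right hw.le], ?_⟩
    rw [h1, show w - ‖w‖⁻¹ • w = (1 - ‖w‖⁻¹) • w by rw [sub_smul, one_smul], norm_smul,
      Real.norm_of_nonneg (sub_nonneg.2 (inv_le_one_of_one_le₀ hw.le)), sub_mul, one_mul,
      inv_mul_cancel₀ hw0]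
    ring

/-- Each `v i` absorbs the share `(1 - ‖v i‖) / ∑ j, lam j * (1 - ‖v j‖)` of `r`. -/
lemma exists_sum_smul_eq_add_of_norm_le {lam : ι → ℝ} (hlam : ∀ i, 0 ≤ lam i) {v : ι → Z}
    (hv : ∀ i, ‖v i‖ ≤ 1) {r : Z} (hr : ‖r‖ ≤ ∑ i, lam i * (1 - ‖v i‖)) :
    ∃ v' : ι → Z, ∑ i, lam i • v' i = ∑ i, lam i • v i + r ∧
      ∀ i, ‖v' i‖ ≤ 1 ∧ lam i * ‖v' i - v i‖ ≤ ‖r‖ := by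
  set D := ∑ i, lam i * (1 - ‖v i‖)
  rcases eq_or_ne r 0 with rfl | hr0
  · exact ⟨v, by simp, fun i => ⟨hv i, by simp⟩⟩
  have hD : 0 < D := (norm_pos_iff.2 hr0).trans_le hr
  have hslack : ∀ i, lam i * (1 - ‖v i‖) ≤ D := fun i =>
    Finset.single_le_sum (fun j _ => mul_nonneg (hlam j) (sub_nonneg.2 (hv j)))
      (Finset.mem_univ i)
  refine ⟨fun i => v i + ((1 - ‖v i‖) / D) • r, ?_, fun i => ⟨?_, ?_⟩⟩
  · have hsum : ∑ i, lam i * ((1 - ‖v i‖) / D) = 1 := by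
      simp_rw [← mul_div_assoc, ← Finset.sum_div]
      exact div_self hD.ne'
    simp_rw [smul_add, smul_smul, Finset.sum_add_distrib, ← Finset.sum_smul, hsum, one_smul]
  · have h1 : 0 ≤ 1 - ‖v i‖ := sub_nonneg.2 (hv i)
    calc ‖v i + ((1 - ‖v i‖) / D) • r‖ ≤ ‖v i‖ + (1 - ‖v i‖) / D * ‖r‖ := by
          grw [norm_add_le, norm_smul, Real.norm_of_nonneg (by positivity)]
      _ ≤ ‖v i‖ + (1 - ‖v i‖) / D * D := by gcongr
      _ = 1 := by field_simp; ring
  · rw [add_sub_cancel_left, norm_smul, Real.norm_of_nonneg (div_nonneg (sub_nonneg.2 (hv i))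
      hD.le), ← mul_assoc, mul_div_assoc', div_mul_eq_mul_div, div_le_iff₀ hD]
    exact mul_le_mul_of_nonneg_right (hslack i) (norm_nonneg r) |>.trans_eq (mul_comm _ _)

lemma exists_sum_smul_eq_add_of_sum_norm_le {lam : ι → ℝ} (hlam0 : ∀ i, 0 ≤ lam i)
    (hlam1 : ∑ i, lam i = 1) {w : ι → Z} {ρ : Z} (hmass : ∑ i, lam i * ‖w i‖ + ‖ρ‖ ≤ 1)
    {η : ℝ} (hη : 0 ≤ η) (hw : ∀ i, 0 < lam i → ‖w i‖ ≤ 1 + η) :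
    ∃ w' : ι → Z, ∑ i, lam i • w' i = ∑ i, lam i • w i + ρ ∧
      ∀ i, ‖w' i‖ ≤ 1 ∧ lam i * ‖w' i - w i‖ ≤ 2 * (‖ρ‖ + η) := by
  choose v hvmin hvw using fun i => exists_norm_eq_min_one (w i)
  set E := ∑ i, lam i * ‖w i - v i‖
  have hE : E ≤ η := by
    calc E ≤ ∑ i, lam i * η := Finset.sum_le_sum fun i _ => by
          rcases (hlam0 i).eq_or_lt with hi | hi
          · simp [← hi]
          · have : ‖w i‖ - η ≤ min ‖w i‖ 1 := le_min (by linarith) (by linarith [hw i hi])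
            exact mul_le_mul_of_nonneg_left (by linarith [hvw i, hvmin i]) (hlam0 i)
      _ = η := by rw [← Finset.sum_mul, hlam1, one_mul]
  set r := ρ + ∑ i, lam i • (w i - v i)
  have hr : ‖r‖ ≤ ‖ρ‖ + E := by
    grw [norm_add_le, norm_sum_smul_le hlam0]
  have hslack : ‖r‖ ≤ ∑ i, lam i * (1 - ‖v i‖) := by
    have : ∑ i, lam i * (1 - ‖v i‖) = 1 - ∑ i, lam i * ‖w i‖ + E := by
      simp_rw [E, mul_sub, mul_one, Finset.sum_sub_distrib, hlam1, ← hvw]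
      simp_rw [mul_add, Finset.sum_add_distrib]
      ring
    linarith
  obtain ⟨v', hsum, hv'⟩ := exists_sum_smul_eq_add_of_norm_le hlam0
    (fun i => (hvmin i).trans_le (min_le_right _ _)) hslack
  refine ⟨v', ?_, fun i => ⟨(hv' i).1, ?_⟩⟩
  · rw [hsum]
    simp_rw [r, smul_sub, Finset.sum_sub_distrib]
    abel
  · have hi : lam i * ‖w i - v i‖ ≤ E :=
      Finset.single_le_sum (f := fun j => lam j * ‖w j - v j‖)
        (fun j _ => mul_nonneg (hlam0 j) (norm_nonneg _)) (Finset.mem_univ i)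
    calc lam i * ‖v' i - w i‖ ≤ lam i * ‖v' i - v i‖ + lam i * ‖w i - v i‖ := by
          rw [← mul_add, ← norm_neg (w i - v i), neg_sub]
          exact mul_le_mul_of_nonneg_left (norm_sub_le_norm_sub_add_norm_sub _ _ _) (hlam0 i)
      _ ≤ 2 * (‖ρ‖ + η) := by linarith [(hv' i).2, norm_nonneg ρ]

end Redistribution

section ApproxDecomposition

variable {Z : Type*} [NormedAddCommGroup Z] [NormedSpace ℝ Z] {ι : Type*} [Fintype ι]

def ApproxDecomposition (lam : ι → ℝ) (s : ι → Z) (f : ι → StrongDual ℝ Z) (ε : ℝ) (w : Z) :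
    Prop :=
  ∃ v : ι → Z, ‖w - ∑ i, lam i • v i‖ ≤ ε ∧ ‖w - ∑ i, lam i • v i‖ + ∑ i, lam i * ‖v i‖ ≤ ‖w‖ ∧
    ∀ i, 0 < lam i → ‖v i‖ ≤ ‖s i‖ + ε ∧ f i (s i) - ε < f i (v i)

lemma ApproxDecomposition.mem_sum_smul_ballSlice {lam : ι → ℝ} (hlam0 : ∀ i, 0 ≤ lam i)
    (hlam1 : ∑ i, lam i = 1) {f : ι → StrongDual ℝ Z} (hf : ∀ i, ‖f i‖ ≤ 1) {α : ι → ℝ}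
    {s : ι → Z} (hs : ∀ i, s i ∈ ballSlice Z (f i) (α i)) {ε : ℝ}
    (hε : ∀ i, 0 < lam i → 5 * ε < lam i * (f i (s i) - (1 - α i))) {w : Z} (hw : ‖w‖ ≤ 1)
    (hd : ApproxDecomposition lam s f ε w) : w ∈ ∑ i, lam i • ballSlice Z (f i) (α i) := by
  obtain ⟨v, hρ, hmass, hv⟩ := hd
  have hε0 : 0 ≤ ε := (norm_nonneg _).trans hρ
  obtain ⟨w', hsum, hw'⟩ := exists_sum_smul_eq_add_of_sum_norm_le hlam0 hlam1
    (ρ := w - ∑ i, lam i • v i) (by linarith) hε0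
    fun i hi => (hv i hi).1.trans (by linarith [(mem_ballSlice_iff.1 (hs i)).1])
  rw [add_sub_cancel] at hsum
  rw [← hsum]
  refine sum_smul_mem_sum_smul_set hs fun i hi0 => mem_ballSlice_iff.2 ⟨(hw' i).1, ?_⟩
  have hi : 0 < lam i := (hlam0 i).lt_of_ne' hi0
  have hlam_le : lam i ≤ 1 :=
    hlam1 ▸ Finset.single_le_sum (fun j _ => hlam0 j) (Finset.mem_univ i)
  have hfv : f i (v i) - f i (w' i) ≤ ‖w' i - v i‖ := by
    rw [← map_sub, ← norm_neg, neg_sub]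
    exact (le_abs_self _).trans (abs_apply_le_norm_of_norm_le_one (hf i) _)
  have := (hw' i).2
  have := (hv i hi).2
  have := hε i hi
  refine lt_of_mul_lt_mul_left ?_ hi.le
  nlinarith

end ApproxDecomposition

section OneSide

variable {X : Type*} [NormedAddCommGroup X] [NormedSpace ℝ X]

lemma sum_smul_inv_norm_smul {ι : Type*} [Fintype ι] (lam : ι → ℝ) (xv : ι → X) (a : ℝ) :
    ∑ i, (lam i * ‖xv i‖ / a) • ‖xv i‖⁻¹ • xv i = a⁻¹ • ∑ i, lam i • xv i := by
  rw [Finset.smul_sum]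
  refine Finset.sum_congr rfl fun i _ => ?_
  rcases eq_or_ne (xv i) 0 with hi | hi
  · simp [hi]
  · rw [smul_smul, smul_smul]
    field_simp [norm_ne_zero_iff.2 hi]

lemma norm_smul_le_and_sub_lt_apply_smul {g : StrongDual ℝ X} (hg : ‖g‖ ≤ 1) {x p : X}
    (hx : ‖x‖ ≤ 1) (hp : ‖p‖ ≤ 1) {τ ε : ℝ} (hτ : |τ - 1| < ε / 4)
    (hgp : g (‖x‖⁻¹ • x) - ε / 4 < g p) :
    ‖(τ * ‖x‖) • p‖ ≤ ‖x‖ + ε ∧ g x - ε < g ((τ * ‖x‖) • p) := by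
  have hgx : g x = ‖x‖ * g (‖x‖⁻¹ • x) := by
    rcases eq_or_ne x 0 with rfl | hx0
    · simp
    · rw [← smul_eq_mul, ← map_smul, smul_inv_smul₀ (norm_ne_zero_iff.2 hx0)]
  have hε : 0 < ε := by linarith [abs_nonneg (τ - 1)]
  have hτ' := abs_lt.1 hτ
  have hgp' := abs_le.1 ((abs_apply_le_norm_of_norm_le_one hg p).trans hp)
  have hτgp : g (‖x‖⁻¹ • x) - ε / 2 < τ * g p := by nlinarith
  rw [norm_smul, Real.norm_eq_abs, abs_mul, abs_norm, map_smul, smul_eq_mul, hgx]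
  constructor
  · calc |τ| * ‖x‖ * ‖p‖ ≤ (1 + ε / 4) * ‖x‖ * 1 := by
          gcongr
          exact abs_le.2 ⟨by linarith, by linarith⟩
      _ ≤ ‖x‖ + ε := by nlinarith
  · nlinarith [mul_le_mul_of_nonneg_left hτgp.le (norm_nonneg x),
      mul_le_mul_of_nonneg_right hx hε.le]

lemma exists_ballSlice_subset [Nontrivial X] (g : StrongDual ℝ X) {p₀ : X} (hp₀ : ‖p₀‖ ≤ 1)
    {η : ℝ} (hη : 0 < η) :
    ∃ (h : StrongDual ℝ X) (β : ℝ), ‖h‖ = 1 ∧ 0 < β ∧ p₀ ∈ ballSlice X h β ∧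
      ballSlice X h β ⊆ {p | g p₀ - η < g p} := by
  rcases eq_or_ne g 0 with rfl | hg
  · obtain ⟨v, hv⟩ := exists_ne (0 : X)
    obtain ⟨h, hh, -⟩ := exists_dual_vector ℝ v (norm_ne_zero_iff.2 hv)
    refine ⟨h, 3, hh, three_pos, mem_ballSlice_iff.2 ⟨hp₀, ?_⟩, fun p _ => by simpa using hη⟩
    linarith [neg_abs_le (h p₀), abs_apply_le_norm_of_norm_le_one hh.le p₀]
  · have hG : 0 < ‖g‖ := norm_pos_iff.2 hg
    have hslice : ∀ p, 1 - (1 - (g p₀ - η) / ‖g‖) < (‖g‖⁻¹ • g) p ↔ g p₀ - η < g p := by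
      intro p
      rw [sub_sub_cancel, smul_apply, smul_eq_mul, inv_mul_eq_div,
        div_lt_div_iff_of_pos_right hG]
    have hgp₀ : g p₀ ≤ ‖g‖ :=
      (Real.le_norm_self _).trans ((g.le_opNorm p₀).trans (mul_le_of_le_one_right hG.le hp₀))
    refine ⟨‖g‖⁻¹ • g, 1 - (g p₀ - η) / ‖g‖, ?_, ?_, mem_ballSlice_iff.2 ⟨hp₀, (hslice p₀).2
      (by linarith)⟩, fun p hp => (hslice p).1 (mem_ballSlice_iff.1 hp).2⟩
    · exact norm_inv_norm_smul_of_ne_zero hg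
    · rw [sub_pos, div_lt_one hG]
      linarith

lemma eventually_abs_apply_inv_norm_smul_sub_lt (φ : StrongDual ℝ X) {x : X} (hx : x ≠ 0) {ε : ℝ}
    (hε : 0 < ε) :
    ∀ᶠ δ in 𝓝 0, ∀ u : X, |‖u‖ - ‖x‖| < δ → |φ u - φ x| < δ →
      |φ (‖u‖⁻¹ • u) - φ (‖x‖⁻¹ • x)| < ε := by
  have hcont : ContinuousAt (fun q : ℝ × ℝ => q.2 / q.1) (‖x‖, φ x) :=
    continuousAt_snd.div continuousAt_fst (norm_ne_zero_iff.2 hx)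
  obtain ⟨η, hη, hq⟩ := Metric.continuousAt_iff.1 hcont ε hε
  refine (eventually_le_nhds hη).mono fun δ hδ u hu hφu => ?_
  have := @hq (‖u‖, φ u) (by
    rw [Prod.dist_eq, Real.dist_eq, Real.dist_eq]
    exact max_lt (hu.trans_le hδ) (hφu.trans_le hδ))
  simpa [Real.dist_eq, inv_mul_eq_div] using this

lemma NormOneCCSInteriorProp.exists_forall_eq_sum_smul (hX : NormOneCCSInteriorProp X) {n : ℕ}
    (hn : 0 < n) {μ : Fin n → ℝ} (hμ0 : ∀ i, 0 ≤ μ i) (hμ1 : ∑ i, μ i = 1) {p₀ : Fin n → X}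
    (hp₀ : ∀ i, ‖p₀ i‖ ≤ 1) (hz : ‖∑ i, μ i • p₀ i‖ = 1) (g : Fin n → StrongDual ℝ X) {η : ℝ}
    (hη : 0 < η) :
    ∃ (F : Finset (StrongDual ℝ X)) (δ : ℝ), 0 < δ ∧ ∀ w : X, ‖w‖ ≤ 1 →
      (∀ φ ∈ F, |φ w - φ (∑ i, μ i • p₀ i)| < δ) →
      ∃ p : Fin n → X, ∑ i, μ i • p i = w ∧ ∀ i, ‖p i‖ ≤ 1 ∧ g i (p₀ i) - η < g i (p i) := by
  have : Nontrivial X := nontrivial_of_ne _ 0 (norm_ne_zero_iff.1 (hz ▸ one_ne_zero))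
  choose h β hh hβ hp₀S hS using fun i => exists_ballSlice_subset (g i) (hp₀ i) hη
  obtain ⟨F, δ, hδ, hF⟩ := hX _ ⟨n, h, β, μ, hn, hh, hβ, hμ0, hμ1, rfl⟩ _
    (mem_sum_smul_set_iff.2 ⟨p₀, hp₀S, rfl⟩) hz
  refine ⟨F, δ, hδ, fun w hw hwF => ?_⟩
  obtain ⟨p, hp, hpw⟩ := mem_sum_smul_set_iff.1 (hF ⟨mem_closedBall_zero_iff.2 hw, hwF⟩)
  exact ⟨p, hpw, fun i => ⟨(mem_ballSlice_iff.1 (hp i)).1, hS i (hp i)⟩⟩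

lemma NormOneCCSInteriorProp.exists_approxDecomposition_of_ne_zero
    (hX : NormOneCCSInteriorProp X) {n : ℕ} {lam : Fin n → ℝ} (hlam : ∀ i, 0 ≤ lam i)
    {xv : Fin n → X} (hxv : ∀ i, ‖xv i‖ ≤ 1) {x : X} (hx : ∑ i, lam i • xv i = x)
    (hnorm : ∑ i, lam i * ‖xv i‖ = ‖x‖) (hx0 : x ≠ 0) {g : Fin n → StrongDual ℝ X}
    (hg : ∀ i, ‖g i‖ ≤ 1) {ε : ℝ} (hε : 0 < ε) :
    ∃ (F : Finset (StrongDual ℝ X)) (δ : ℝ), 0 < δ ∧ ∀ u : X, |‖u‖ - ‖x‖| < δ →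
      (∀ φ ∈ F, |φ u - φ x| < δ) → ApproxDecomposition lam xv g ε u := by
  have ha : 0 < ‖x‖ := norm_pos_iff.2 hx0
  have hn : 0 < n := Nat.pos_of_ne_zero fun hn => hx0 (by subst hn; simp [← hx])
  have hunit := sum_smul_inv_norm_smul lam xv ‖x‖
  rw [hx] at hunit
  obtain ⟨F, δ₀, hδ₀, hF⟩ := hX.exists_forall_eq_sum_smul hn
    (fun i => div_nonneg (mul_nonneg (hlam i) (norm_nonneg _)) ha.le)
    (by rw [← Finset.sum_div, hnorm, div_self ha.ne']) (fun i => norm_inv_norm_smul_le_one _)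
    (hunit ▸ norm_inv_norm_smul_of_ne_zero hx0) g (by positivity : 0 < ε / 4)
  obtain ⟨δ, hδ, hδF, hδa, hδε⟩ := (((eventually_all_finset F).2 fun φ _ =>
    eventually_abs_apply_inv_norm_smul_sub_lt φ hx0 hδ₀).and ((eventually_lt_nhds ha).and
    (eventually_lt_nhds (by positivity : 0 < ‖x‖ * (ε / 4))))).exists_gt
  refine ⟨F, δ, hδ, fun u hu huF => ?_⟩
  have hu0 : 0 < ‖u‖ := by linarith [(abs_lt.1 hu).1]
  have hτ : |‖u‖ / ‖x‖ - 1| < ε / 4 := by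
    rw [← div_self ha.ne', ← sub_div, abs_div, abs_of_pos ha, div_lt_iff₀ ha]
    linarith
  obtain ⟨p, hpu, hp⟩ := hF (‖u‖⁻¹ • u) (norm_inv_norm_smul_le_one u)
    fun φ hφ => hunit ▸ hδF φ hφ u hu (huF φ hφ)
  have hsum : ∑ i, lam i • (‖u‖ / ‖x‖ * ‖xv i‖) • p i = u := by
    calc ∑ i, lam i • (‖u‖ / ‖x‖ * ‖xv i‖) • p i
          = ‖u‖ • ∑ i, (lam i * ‖xv i‖ / ‖x‖) • p i := by
          simp_rw [Finset.smul_sum, smul_smul]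
          congr! 2
          ring
      _ = u := by rw [hpu, smul_inv_smul₀ hu0.ne']
  refine ⟨fun i => (‖u‖ / ‖x‖ * ‖xv i‖) • p i, by simpa [hsum] using hε.le, ?_,
    fun i _ => norm_smul_le_and_sub_lt_apply_smul (hg i) (hxv i) (hp i).1 hτ (hp i).2⟩
  rw [hsum, sub_self, norm_zero, zero_add]
  calc ∑ i, lam i * ‖(‖u‖ / ‖x‖ * ‖xv i‖) • p i‖ ≤ ∑ i, ‖u‖ / ‖x‖ * (lam i * ‖xv i‖) := by
        refine Finset.sum_le_sum fun i _ => ?_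
        rw [norm_smul, Real.norm_of_nonneg (by positivity)]
        have := mul_le_of_le_one_right (by positivity : 0 ≤ ‖u‖ / ‖x‖ * ‖xv i‖) (hp i).1
        exact (mul_le_mul_of_nonneg_left this (hlam i)).trans_eq (by ring)
    _ = ‖u‖ := by rw [← Finset.mul_sum, hnorm, div_mul_cancel₀ _ ha.ne']

lemma NormOneCCSInteriorProp.exists_approxDecomposition (hX : NormOneCCSInteriorProp X)
    {n : ℕ} {lam : Fin n → ℝ} (hlam : ∀ i, 0 ≤ lam i) {xv : Fin n → X} (hxv : ∀ i, ‖xv i‖ ≤ 1)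
    {x : X} (hx : ∑ i, lam i • xv i = x) (hnorm : ∑ i, lam i * ‖xv i‖ = ‖x‖)
    {g : Fin n → StrongDual ℝ X} (hg : ∀ i, ‖g i‖ ≤ 1) {ε : ℝ} (hε : 0 < ε) :
    ∃ (F : Finset (StrongDual ℝ X)) (δ : ℝ), 0 < δ ∧ ∀ u : X, |‖u‖ - ‖x‖| < δ →
      (∀ φ ∈ F, |φ u - φ x| < δ) → ApproxDecomposition lam xv g ε u := by
  rcases eq_or_ne x 0 with rfl | hx0
  · refine ⟨∅, ε, hε, fun u hu _ => ⟨0, ?_, by simp, fun i hi => ?_⟩⟩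
    · simpa using hu.le
    · have hxi : lam i * ‖xv i‖ = 0 := (Finset.sum_eq_zero_iff_of_nonneg fun j _ =>
        mul_nonneg (hlam j) (norm_nonneg _)).1 (hnorm.trans norm_zero) i (Finset.mem_univ i)
      simp [norm_eq_zero.1 ((mul_eq_zero.1 hxi).resolve_left hi.ne'), hε, hε.le]
  · exact hX.exists_approxDecomposition_of_ne_zero hlam hxv hx hnorm hx0 hg hε

end OneSide

section OneSum

variable {X Y : Type*} [NormedAddCommGroup X] [NormedSpace ℝ X] [NormedAddCommGroup Y]
  [NormedSpace ℝ Y] {ι : Type*} [Fintype ι]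

lemma WithLp.fst_sum_smul (c : ι → ℝ) (s : ι → WithLp 1 (X × Y)) :
    (∑ i, c i • s i).fst = ∑ i, c i • (s i).fst :=
  (map_sum (WithLp.fstL 1 ℝ X Y) (fun i => c i • s i) Finset.univ).trans (by simp)

lemma WithLp.snd_sum_smul (c : ι → ℝ) (s : ι → WithLp 1 (X × Y)) :
    (∑ i, c i • s i).snd = ∑ i, c i • (s i).snd :=
  (map_sum (WithLp.sndL 1 ℝ X Y) (fun i => c i • s i) Finset.univ).trans (by simp)

lemma WithLp.sum_norm_fst_eq_and_sum_norm_snd_eq {lam : ι → ℝ} (hlam : ∀ i, 0 ≤ lam i)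
    {s : ι → WithLp 1 (X × Y)} (h : ∑ i, lam i * ‖s i‖ ≤ ‖∑ i, lam i • s i‖) :
    ∑ i, lam i * ‖(s i).fst‖ = ‖(∑ i, lam i • s i).fst‖ ∧
      ∑ i, lam i * ‖(s i).snd‖ = ‖(∑ i, lam i • s i).snd‖ := by
  have hX := norm_sum_smul_le hlam fun i => (s i).fst
  have hY := norm_sum_smul_le hlam fun i => (s i).snd
  rw [← WithLp.fst_sum_smul] at hX
  rw [← WithLp.snd_sum_smul] at hY
  simp_rw [WithLp.prod_norm_eq_of_L1, mul_add, Finset.sum_add_distrib] at h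
  constructor <;> linarith

lemma StrongDual.exists_apply_eq_fst_add_snd (f : StrongDual ℝ (WithLp 1 (X × Y))) :
    ∃ (g : StrongDual ℝ X) (h : StrongDual ℝ Y), ‖g‖ ≤ ‖f‖ ∧ ‖h‖ ≤ ‖f‖ ∧
      ∀ w, f w = g w.fst + h w.snd := by
  let e : X × Y →L[ℝ] WithLp 1 (X × Y) := (WithLp.prodContinuousLinearEquiv 1 ℝ X Y).symm
  refine ⟨f.comp (e.comp (.inl ℝ X Y)), f.comp (e.comp (.inr ℝ X Y)),
    ContinuousLinearMap.opNorm_le_bound _ (norm_nonneg f) fun a => ?_,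
    ContinuousLinearMap.opNorm_le_bound _ (norm_nonneg f) fun b => ?_,
    fun w => ?_⟩
  · simpa [e, WithLp.norm_toLp_fst] using f.le_opNorm (WithLp.toLp 1 (a, (0 : Y)))
  · simpa [e, WithLp.norm_toLp_snd] using f.le_opNorm (WithLp.toLp 1 ((0 : X), b))
  · simp [e, ← map_add, ← WithLp.toLp_add]
    rfl

lemma ApproxDecomposition.withLp_one {lam : ι → ℝ} {s : ι → WithLp 1 (X × Y)}
    {f : ι → StrongDual ℝ (WithLp 1 (X × Y))} {g : ι → StrongDual ℝ X} {h : ι → StrongDual ℝ Y}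
    (hf : ∀ i w, f i w = g i w.fst + h i w.snd) {ε : ℝ} {w : WithLp 1 (X × Y)}
    (hu : ApproxDecomposition lam (fun i => (s i).fst) g ε w.fst)
    (hv : ApproxDecomposition lam (fun i => (s i).snd) h ε w.snd) :
    ApproxDecomposition lam s f (2 * ε) w := by
  obtain ⟨uu, hu₁, hu₂, hu₃⟩ := hu
  obtain ⟨vv, hv₁, hv₂, hv₃⟩ := hv
  have hres : ‖w - ∑ i, lam i • WithLp.toLp 1 (uu i, vv i)‖ =
      ‖w.fst - ∑ i, lam i • uu i‖ + ‖w.snd - ∑ i, lam i • vv i‖ := by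
    simp [WithLp.prod_norm_eq_of_L1, WithLp.fst_sum_smul, WithLp.snd_sum_smul]
  refine ⟨fun i => WithLp.toLp 1 (uu i, vv i), by linarith, ?_, fun i hi => ?_⟩
  · simp_rw [hres, WithLp.prod_norm_eq_of_L1 w, WithLp.prod_norm_eq_of_L1 (WithLp.toLp 1 _),
      WithLp.toLp_fst, WithLp.toLp_snd, mul_add, Finset.sum_add_distrib]
    linarith
  · rw [WithLp.prod_norm_eq_of_L1, WithLp.prod_norm_eq_of_L1, hf, hf]
    simp only [WithLp.toLp_fst, WithLp.toLp_snd]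
    constructor <;> linarith [hu₃ i hi, hv₃ i hi]

lemma WithLp.exists_forall_abs_sub_lt_fst_snd {z : WithLp 1 (X × Y)} (hz : ‖z‖ = 1)
    (FX : Finset (StrongDual ℝ X)) (FY : Finset (StrongDual ℝ Y)) {δX δY : ℝ} (hδX : 0 < δX)
    (hδY : 0 < δY) :
    ∃ (F : Finset (StrongDual ℝ (WithLp 1 (X × Y)))) (δ : ℝ), 0 < δ ∧
      ∀ w : WithLp 1 (X × Y), ‖w‖ ≤ 1 → (∀ φ ∈ F, |φ w - φ z| < δ) →
        (|‖w.fst‖ - ‖z.fst‖| < δX ∧ ∀ φ ∈ FX, |φ w.fst - φ z.fst| < δX) ∧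
        (|‖w.snd‖ - ‖z.snd‖| < δY ∧ ∀ φ ∈ FY, |φ w.snd - φ z.snd| < δY) := by
  classical
  obtain ⟨φx, hφx, hφxz⟩ := exists_dual_vector'' ℝ z.fst
  obtain ⟨φy, hφy, hφyz⟩ := exists_dual_vector'' ℝ z.snd
  refine ⟨(insert φx FX).image (·.comp (WithLp.fstL 1 ℝ X Y)) ∪
    (insert φy FY).image (·.comp (WithLp.sndL 1 ℝ X Y)), min δX δY, lt_min hδX hδY,
    fun w hw hwF => ?_⟩
  have hX (φ) (hφ : φ ∈ insert φx FX) : |φ w.fst - φ z.fst| < min δX δY :=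
    hwF _ (Finset.mem_union_left _ (Finset.mem_image_of_mem _ hφ))
  have hY (φ) (hφ : φ ∈ insert φy FY) : |φ w.snd - φ z.snd| < min δX δY :=
    hwF _ (Finset.mem_union_right _ (Finset.mem_image_of_mem _ hφ))
  have hx := sub_lt_norm_of_abs_sub_lt hφx (by simpa using hφxz)
    (hX φx (Finset.mem_insert_self _ _))
  have hy := sub_lt_norm_of_abs_sub_lt hφy (by simpa using hφyz)
    (hY φy (Finset.mem_insert_self _ _))
  rw [WithLp.prod_norm_eq_of_L1] at hw hz
  have := min_le_left δX δY
  have := min_le_right δX δY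
  exact ⟨⟨abs_sub_lt_iff.2 ⟨by linarith, by linarith⟩,
      fun φ hφ => (hX φ (Finset.mem_insert_of_mem hφ)).trans_le (min_le_left _ _)⟩,
    ⟨abs_sub_lt_iff.2 ⟨by linarith, by linarith⟩,
      fun φ hφ => (hY φ (Finset.mem_insert_of_mem hφ)).trans_le (min_le_right _ _)⟩⟩

end OneSum

theorem normOneCCSInteriorProp_one_sum_general
    {X Y : Type*} [NormedAddCommGroup X] [NormedSpace ℝ X]
    [NormedAddCommGroup Y] [NormedSpace ℝ Y]
    (hX : NormOneCCSInteriorProp X) (hY : NormOneCCSInteriorProp Y) :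
    NormOneCCSInteriorProp (WithLp 1 (X × Y)) := by
  rintro C ⟨n, f, α, lam, -, hf, -, hlam0, hlam1, rfl⟩ z hz hz1
  obtain ⟨s, hs, rfl⟩ := mem_sum_smul_set_iff.1 hz
  have hs1 (i : Fin n) : ‖s i‖ ≤ 1 := (mem_ballSlice_iff.1 (hs i)).1
  obtain ⟨hnX, hnY⟩ := WithLp.sum_norm_fst_eq_and_sum_norm_snd_eq hlam0 <|
    (Finset.sum_le_sum fun i _ => mul_le_of_le_one_right (hlam0 i) (hs1 i)).trans_eq
      (hlam1.trans hz1.symm)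
  obtain ⟨ε, hε, hεs⟩ := exists_pos_forall_lt (fun i => 0 < lam i)
    (a := fun i => lam i * (f i (s i) - (1 - α i))) fun i hi =>
      mul_pos hi (sub_pos.2 (mem_ballSlice_iff.1 (hs i)).2)
  choose g h hg hh hgh using fun i => (f i).exists_apply_eq_fst_add_snd
  obtain ⟨FX, δX, hδX, hdX⟩ := hX.exists_approxDecomposition hlam0
    (fun i => (WithLp.norm_fst_le _ (s i)).trans (hs1 i)) (WithLp.fst_sum_smul lam s).symm hnX
    (fun i => (hg i).trans (hf i).le) (by positivity : 0 < ε / 10)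
  obtain ⟨FY, δY, hδY, hdY⟩ := hY.exists_approxDecomposition hlam0
    (fun i => (WithLp.norm_snd_le _ (s i)).trans (hs1 i)) (WithLp.snd_sum_smul lam s).symm hnY
    (fun i => (hh i).trans (hf i).le) (by positivity : 0 < ε / 10)
  obtain ⟨F, δ, hδ, hF⟩ := WithLp.exists_forall_abs_sub_lt_fst_snd hz1 FX FY hδX hδY
  refine ⟨F, δ, hδ, fun w ⟨hw, hwF⟩ => ?_⟩
  rw [mem_closedBall_zero_iff] at hw
  obtain ⟨⟨hu₁, hu₂⟩, hv₁, hv₂⟩ := hF w hw hwF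
  exact ApproxDecomposition.mem_sum_smul_ballSlice hlam0 hlam1 (fun i => (hf i).le) hs
    (fun i hi => by linarith [hεs i hi]) hw ((hdX _ hu₁ hu₂).withLp_one hgh (hdY _ hv₁ hv₂))

/-- The property that norm-one elements of convex combinations of
slices of the closed unit ball are relative-weak interior points of these
combinations passes to the `1`-sum `X ⊕₁ Y`. -/
theorem normOneCCSInteriorProp_one_sum
    {X Y : Type*} [NormedAddCommGroup X] [NormedSpace ℝ X] [CompleteSpace X]
    [NormedAddCommGroup Y] [NormedSpace ℝ Y] [CompleteSpace Y]
    (hX : NormOneCCSInteriorProp X) (hY : NormOneCCSInteriorProp Y) :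
    NormOneCCSInteriorProp (WithLp 1 (X × Y)) :=
  normOneCCSInteriorProp_one_sum_general hX hY
end
end

section
/- Let X and Y be Banach spaces. Then every finite convex combination of slices of the closed unit ball of X ⊕_∞ Y is relatively weakly open in the closed unit ball if and only if both X and Y have this property (i.e., every finite convex combination of slices of their closed unit balls is relatively weakly open). -/
open scoped Pointwise

noncomputable section

/-!
If `J : W → Z` maps `B_W` into `B_Z` and has a left inverse `P` mapping `B_Z` into `B_W`, then
`J` maps `C = ∑ λᵢ S(fᵢ, αᵢ)` into `Ĉ = ∑ λᵢ S(fᵢ ∘ P, αᵢ)` and `P` maps `Ĉ` back into `C`; a weak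
neighbourhood of `J z` inside `Ĉ` pulls back along `J` to one of `z` inside `C`. The coordinate
embeddings and projections of `X ⊕_∞ Y` are such pairs, so (P1) passes to `X` and `Y`.

Conversely, write `z = ∑ λᵢ zᵢ` with `zᵢ ∈ S(Fᵢ, αᵢ)`, split `Fᵢ = pᵢ ⊕ qᵢ` and the margin
`Fᵢ zᵢ - (1 - αᵢ)` into two halves `εᵢ`. The coordinates of points weakly close to `z` lie in
the combinations of `{pᵢ > pᵢ xᵢ - εᵢ}` in `B_X` and of `{qᵢ > qᵢ yᵢ - εᵢ}` in `B_Y`, which are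
relatively weakly open by (P1) for `X` and `Y`; since the norm is the maximum, pairing the pieces
coordinatewise lands back in `∑ λᵢ S(Fᵢ, αᵢ)`.
-/

open Set

namespace Set

variable {ι R M N : Type*} [AddCommMonoid M] [AddCommMonoid N]

theorem sum_prod_sum (s : Finset ι) (A : ι → Set M) (B : ι → Set N) :
    (∑ i ∈ s, A i) ×ˢ (∑ i ∈ s, B i) = ∑ i ∈ s, A i ×ˢ B i := by
  induction s using Finset.cons_induction with
  | empty => simp
  | cons a s ha ih => simp only [Finset.sum_cons, ← ih, prod_add_prod_comm]

variable [Fintype ι]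

theorem mem_sum_smul_iff [SMul R M] {lam : ι → R} {S : ι → Set M} {z : M} :
    z ∈ ∑ i, lam i • S i ↔ ∃ w : ι → M, (∀ i, w i ∈ S i) ∧ ∑ i, lam i • w i = z := by
  rw [mem_fintype_sum]
  constructor
  · rintro ⟨g, hg, rfl⟩
    choose w hw hgw using fun i => mem_smul_set.1 (hg i)
    exact ⟨w, hw, Finset.sum_congr rfl fun i _ => hgw i⟩
  · rintro ⟨w, hw, rfl⟩
    exact ⟨fun i => lam i • w i, fun i => smul_mem_smul_set (hw i), rfl⟩

theorem MapsTo.sum_smul {F : Type*} [Semiring R] [Module R M] [Module R N] [FunLike F M N]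
    [LinearMapClass F R M N] (T : F) (lam : ι → R)
    {S : ι → Set M} {S' : ι → Set N} (h : ∀ i, MapsTo T (S i) (S' i)) :
    MapsTo T (∑ i, lam i • S i) (∑ i, lam i • S' i) := by
  intro z hz
  obtain ⟨w, hw, rfl⟩ := mem_sum_smul_iff.1 hz
  exact mem_sum_smul_iff.2 ⟨fun i => T (w i), fun i => h i (hw i), by simp⟩

end Set

section Slices

variable {Z : Type*} [NormedAddCommGroup Z] [NormedSpace ℝ Z]

def ballHalfspace (p : StrongDual ℝ Z) (c : ℝ) : Set Z :=
  {z ∈ Metric.closedBall (0 : Z) 1 | c < p z}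

theorem ballSlice_eq_ballHalfspace (f : StrongDual ℝ Z) (α : ℝ) :
    ballSlice Z f α = ballHalfspace f (1 - α) := rfl

theorem ballHalfspace_eq_ballSlice {p : StrongDual ℝ Z} (hp : p ≠ 0) (c : ℝ) :
    ballHalfspace p c = ballSlice Z (‖p‖⁻¹ • p) (1 - ‖p‖⁻¹ * c) := by
  have hp' : 0 < ‖p‖⁻¹ := inv_pos.2 (norm_pos_iff.2 hp)
  ext z
  simp only [ballSlice, ballHalfspace, mem_sep_iff, sub_sub_cancel,
    FunLike.coe_smul, Pi.smul_apply, smul_eq_mul, mul_lt_mul_iff_right₀ hp']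

theorem ballSlice_eq_closedBall {f : StrongDual ℝ Z} (hf : ‖f‖ = 1) {α : ℝ} (hα : 2 < α) :
    ballSlice Z f α = Metric.closedBall 0 1 := by
  refine sep_eq_self_iff_mem_true.2 fun z hz => ?_
  have : |f z| ≤ 1 := hf ▸ f.unit_le_opNorm z (mem_closedBall_zero_iff.1 hz)
  linarith [neg_abs_le (f z)]

theorem exists_ballSlice_eq_ballHalfspace [Nontrivial Z] {p : StrongDual ℝ Z} {c : ℝ}
    (hne : (ballHalfspace p c).Nonempty) :
    ∃ f α, ‖f‖ = 1 ∧ 0 < α ∧ ballSlice Z f α = ballHalfspace p c := by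
  obtain ⟨x, hx, hcx⟩ := hne
  by_cases hp : p = 0
  · subst hp
    obtain ⟨f, hf⟩ := exists_norm_eq (StrongDual ℝ Z) one_pos.le
    refine ⟨f, 3, hf, three_pos, ?_⟩
    rw [ballSlice_eq_closedBall hf (by norm_num)]
    exact (sep_eq_self_iff_mem_true.2 fun _ _ => hcx).symm
  · refine ⟨_, _, ?_, ?_, (ballHalfspace_eq_ballSlice hp c).symm⟩
    · rw [norm_smul, norm_inv, norm_norm, inv_mul_cancel₀ (norm_ne_zero_iff.2 hp)]
    · have hc : c < ‖p‖ :=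
        hcx.trans_le ((le_abs_self _).trans (p.unit_le_opNorm x (mem_closedBall_zero_iff.1 hx)))
      rwa [sub_pos, inv_mul_lt_iff₀ (norm_pos_iff.2 hp), mul_one]

end Slices

section RelWeakInterior

variable {Z W : Type*} [NormedAddCommGroup Z] [NormedSpace ℝ Z]
  [NormedAddCommGroup W] [NormedSpace ℝ W]

theorem RelWeakInteriorPt.mono {C D : Set Z} {z : Z} (h : RelWeakInteriorPt Z C z)
    (hCD : C ⊆ D) : RelWeakInteriorPt Z D z :=
  let ⟨F, δ, hδ, hF⟩ := h
  ⟨F, δ, hδ, hF.trans hCD⟩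

theorem RelWeakInteriorPt.inter {C D : Set Z} {z : Z} (hC : RelWeakInteriorPt Z C z)
    (hD : RelWeakInteriorPt Z D z) : RelWeakInteriorPt Z (C ∩ D) z := by
  classical
  obtain ⟨F, δ, hδ, hF⟩ := hC
  obtain ⟨G, ε, hε, hG⟩ := hD
  refine ⟨F ∪ G, min δ ε, lt_min hδ hε, fun w ⟨hw, hwFG⟩ => ⟨hF ⟨hw, fun f hf => ?_⟩,
    hG ⟨hw, fun g hg => ?_⟩⟩⟩
  · exact (hwFG f (Finset.mem_union_left G hf)).trans_le (min_le_left δ ε)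
  · exact (hwFG g (Finset.mem_union_right F hg)).trans_le (min_le_right δ ε)

theorem RelWeakInteriorPt.preimage {C : Set Z} {w : W} (T : W →L[ℝ] Z)
    (hT : MapsTo T (Metric.closedBall 0 1) (Metric.closedBall 0 1))
    (h : RelWeakInteriorPt Z C (T w)) : RelWeakInteriorPt W (T ⁻¹' C) w := by
  classical
  obtain ⟨F, δ, hδ, hF⟩ := h
  exact ⟨F.image (·.comp T), δ, hδ, fun u ⟨hu, huF⟩ =>
    hF ⟨hT hu, fun f hf => huF (f.comp T) (Finset.mem_image_of_mem _ hf)⟩⟩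

end RelWeakInterior

section PropP1

variable {Z W : Type*} [NormedAddCommGroup Z] [NormedSpace ℝ Z]
  [NormedAddCommGroup W] [NormedSpace ℝ W]

theorem PropP1.relWeaklyOpen_sum_smul_ballHalfspace (hZ : PropP1 Z) {n : ℕ} {lam : Fin n → ℝ}
    (hlam0 : ∀ i, 0 ≤ lam i) (hlam1 : ∑ i, lam i = 1) (p : Fin n → StrongDual ℝ Z)
    (c : Fin n → ℝ) : RelWeaklyOpen Z (∑ i, lam i • ballHalfspace (p i) (c i)) := by
  intro z hz
  rcases subsingleton_or_nontrivial Z with hZ₀ | hZ₀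
  · exact ⟨∅, 1, one_pos, fun w _ => Subsingleton.elim z w ▸ hz⟩
  obtain ⟨zs, hzs, -⟩ := mem_sum_smul_iff.1 hz
  choose f α hf hα hfα using fun i => exists_ballSlice_eq_ballHalfspace ⟨zs i, hzs i⟩
  have hn : 0 < n := Nat.pos_of_ne_zero (by rintro rfl; simp at hlam1)
  simp only [← hfα] at hz ⊢
  exact hZ _ ⟨n, f, α, lam, hn, hf, hα, hlam0, hlam1, rfl⟩ z hz

theorem mapsTo_ballHalfspace_comp (T : W →L[ℝ] Z)
    (hT : MapsTo T (Metric.closedBall 0 1) (Metric.closedBall 0 1)) (p : StrongDual ℝ Z)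
    (c : ℝ) : MapsTo T (ballHalfspace (p.comp T) c) (ballHalfspace p c) :=
  fun _ ⟨hw, hpw⟩ => ⟨hT hw, hpw⟩

theorem PropP1.of_leftInverse (hZ : PropP1 Z) (J : W →L[ℝ] Z) (P : Z →L[ℝ] W)
    (hPJ : Function.LeftInverse P J)
    (hJ : MapsTo J (Metric.closedBall 0 1) (Metric.closedBall 0 1))
    (hP : MapsTo P (Metric.closedBall 0 1) (Metric.closedBall 0 1)) : PropP1 W := by
  rintro C ⟨n, f, α, lam, -, -, -, hlam0, hlam1, rfl⟩ w hw
  simp only [ballSlice_eq_ballHalfspace] at hw ⊢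
  have hfPJ : ∀ i, ((f i).comp P).comp J = f i := fun i => by ext; simp [hPJ _]
  have hJC := MapsTo.sum_smul J lam fun i => by
    simpa only [hfPJ] using mapsTo_ballHalfspace_comp J hJ ((f i).comp P) (1 - α i)
  have hPC := MapsTo.sum_smul P lam fun i =>
    mapsTo_ballHalfspace_comp P hP (f i) (1 - α i)
  refine ((hZ.relWeaklyOpen_sum_smul_ballHalfspace hlam0 hlam1 _ _ _ (hJC hw)).preimage J
    hJ).mono fun u hu => ?_
  simpa only [hPJ u] using hPC hu

end PropP1

namespace WithLp

open scoped ENNReal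

section

variable (p : ℝ≥0∞) (X Y : Type*) [NormedAddCommGroup X] [NormedSpace ℝ X]
  [NormedAddCommGroup Y] [NormedSpace ℝ Y]

def inlL : X →L[ℝ] WithLp p (X × Y) :=
  (prodContinuousLinearEquiv p ℝ X Y).symm.toContinuousLinearMap.comp
    (ContinuousLinearMap.inl ℝ X Y)

def inrL : Y →L[ℝ] WithLp p (X × Y) :=
  (prodContinuousLinearEquiv p ℝ X Y).symm.toContinuousLinearMap.comp
    (ContinuousLinearMap.inr ℝ X Y)

variable {p X Y}

@[simp] theorem inlL_apply (x : X) : inlL p X Y x = toLp p (x, 0) := rfl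

@[simp] theorem inrL_apply (y : Y) : inrL p X Y y = toLp p (0, y) := rfl

theorem leftInverse_fstL_inlL : Function.LeftInverse (fstL p ℝ X Y) (inlL p X Y) := fun _ => rfl

theorem leftInverse_sndL_inrL : Function.LeftInverse (sndL p ℝ X Y) (inrL p X Y) := fun _ => rfl

theorem apply_eq_comp_inlL_add_comp_inrL (F : StrongDual ℝ (WithLp p (X × Y)))
    (w : WithLp p (X × Y)) : F w = F.comp (inlL p X Y) w.fst + F.comp (inrL p X Y) w.snd := by
  rw [ContinuousLinearMap.comp_apply, ContinuousLinearMap.comp_apply, ← map_add]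
  exact congrArg F (ofLp_injective p (by simp [← toLp_add]; rfl))

variable [Fact (1 ≤ p)]

theorem mapsTo_inlL_closedBall :
    MapsTo (inlL p X Y) (Metric.closedBall 0 1) (Metric.closedBall 0 1) := fun x hx => by
  simpa using hx

theorem mapsTo_inrL_closedBall :
    MapsTo (inrL p X Y) (Metric.closedBall 0 1) (Metric.closedBall 0 1) := fun y hy => by
  simpa using hy

theorem mapsTo_fstL_closedBall :
    MapsTo (fstL p ℝ X Y) (Metric.closedBall 0 1) (Metric.closedBall 0 1) := fun w hw => by
  simpa using (norm_fst_le X w).trans (mem_closedBall_zero_iff.1 hw)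

theorem mapsTo_sndL_closedBall :
    MapsTo (sndL p ℝ X Y) (Metric.closedBall 0 1) (Metric.closedBall 0 1) := fun w hw => by
  simpa using (norm_snd_le X w).trans (mem_closedBall_zero_iff.1 hw)

end

variable {X Y : Type*} [NormedAddCommGroup X] [NormedSpace ℝ X]
  [NormedAddCommGroup Y] [NormedSpace ℝ Y]

theorem toLp_mem_ballSlice {F : StrongDual ℝ (WithLp ⊤ (X × Y))} {α c₁ c₂ : ℝ}
    (hc : c₁ + c₂ = 1 - α) {x : X} {y : Y} (hx : x ∈ ballHalfspace (F.comp (inlL ⊤ X Y)) c₁)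
    (hy : y ∈ ballHalfspace (F.comp (inrL ⊤ X Y)) c₂) :
    toLp ⊤ (x, y) ∈ ballSlice _ F α := by
  refine ⟨?_, ?_⟩
  · rw [mem_closedBall_zero_iff, prod_norm_eq_sup]
    exact sup_le (mem_closedBall_zero_iff.1 hx.1) (mem_closedBall_zero_iff.1 hy.1)
  · rw [apply_eq_comp_inlL_add_comp_inrL, toLp_fst, toLp_snd]
    linarith [hx.2, hy.2]

end WithLp

open WithLp in
theorem PropP1.withLp_top_prod {X Y : Type*} [NormedAddCommGroup X] [NormedSpace ℝ X]
    [NormedAddCommGroup Y] [NormedSpace ℝ Y] (hX : PropP1 X) (hY : PropP1 Y) :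
    PropP1 (WithLp ⊤ (X × Y)) := by
  rintro C ⟨n, F, α, lam, -, -, -, hlam0, hlam1, rfl⟩ z hz
  obtain ⟨zs, hzs, rfl⟩ := mem_sum_smul_iff.1 hz
  set p := fun i => (F i).comp (inlL ⊤ X Y)
  set q := fun i => (F i).comp (inrL ⊤ X Y)
  set ε := fun i => (F i (zs i) - (1 - α i)) / 2
  have hε : ∀ i, 0 < ε i := fun i => half_pos (sub_pos.2 (hzs i).2)
  set A := fun i => ballHalfspace (p i) (p i (zs i).fst - ε i)
  set B := fun i => ballHalfspace (q i) (q i (zs i).snd - ε i)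
  have hA : fstL ⊤ ℝ X Y (∑ i, lam i • zs i) ∈ ∑ i, lam i • A i :=
    mem_sum_smul_iff.2 ⟨fun i => (zs i).fst,
      fun i => ⟨mapsTo_fstL_closedBall (hzs i).1, sub_lt_self _ (hε i)⟩, by simp⟩
  have hB : sndL ⊤ ℝ X Y (∑ i, lam i • zs i) ∈ ∑ i, lam i • B i :=
    mem_sum_smul_iff.2 ⟨fun i => (zs i).snd,
      fun i => ⟨mapsTo_sndL_closedBall (hzs i).1, sub_lt_self _ (hε i)⟩, by simp⟩
  have hc : ∀ i, (p i (zs i).fst - ε i) + (q i (zs i).snd - ε i) = 1 - α i := fun i => by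
    simp only [p, q, ε]
    linarith [apply_eq_comp_inlL_add_comp_inrL (F i) (zs i)]
  have hAB : ∀ i, MapsTo (WithLp.linearEquiv ⊤ ℝ (X × Y)).symm (A i ×ˢ B i)
      (ballSlice _ (F i) (α i)) :=
    fun i _ ⟨ha, hb⟩ => toLp_mem_ballSlice (hc i) ha hb
  have hsub : fstL ⊤ ℝ X Y ⁻¹' (∑ i, lam i • A i) ∩ sndL ⊤ ℝ X Y ⁻¹' (∑ i, lam i • B i) ⊆
      ∑ i, lam i • ballSlice _ (F i) (α i) := by
    rintro w ⟨hwA, hwB⟩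
    have hw : ofLp w ∈ ∑ i, lam i • A i ×ˢ B i := by
      rw [Finset.sum_congr rfl fun i _ => smul_set_prod (lam i) (A i) (B i), ← sum_prod_sum]
      exact ⟨hwA, hwB⟩
    simpa using MapsTo.sum_smul _ lam hAB hw
  refine (((hX.relWeaklyOpen_sum_smul_ballHalfspace hlam0 hlam1 _ _ _ hA).preimage _
    mapsTo_fstL_closedBall).inter ((hY.relWeaklyOpen_sum_smul_ballHalfspace hlam0 hlam1 _ _ _
    hB).preimage _ mapsTo_sndL_closedBall)).mono hsub

theorem propP1_infty_sum_iff_general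
    {X Y : Type*} [NormedAddCommGroup X] [NormedSpace ℝ X]
    [NormedAddCommGroup Y] [NormedSpace ℝ Y] :
    PropP1 (WithLp ⊤ (X × Y)) ↔ PropP1 X ∧ PropP1 Y :=
  ⟨fun h => ⟨h.of_leftInverse _ _ WithLp.leftInverse_fstL_inlL
      WithLp.mapsTo_inlL_closedBall WithLp.mapsTo_fstL_closedBall,
    h.of_leftInverse _ _ WithLp.leftInverse_sndL_inrL
      WithLp.mapsTo_inrL_closedBall WithLp.mapsTo_sndL_closedBall⟩,
  fun ⟨hX, hY⟩ => hX.withLp_top_prod hY⟩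

/-- Every finite convex combination of slices of the closed unit
ball of `X ⊕_∞ Y` is relatively weakly open if and only if both `X` and `Y` have
this property. -/
theorem propP1_infty_sum_iff
    {X Y : Type*} [NormedAddCommGroup X] [NormedSpace ℝ X] [CompleteSpace X]
    [NormedAddCommGroup Y] [NormedSpace ℝ Y] [CompleteSpace Y] :
    PropP1 (WithLp ⊤ (X × Y)) ↔ PropP1 X ∧ PropP1 Y :=
  propP1_infty_sum_iff_general
end
end

section
/- Let X and Y be Banach spaces. If every finite convex combination of slices of the closed unit ball of X is relatively weakly open in B_X, and likewise for Y, then for any slices S₁^X,…,Sₙ^X of B_X, slices S₁^Y,…,Sₙ^Y of B_Y, and λᵢ ≥ 0 with Σλᵢ = 1, the set Σᵢ λᵢ (Sᵢ^X × Sᵢ^Y) is relatively weakly open in the closed unit ball of X ⊕_∞ Y. -/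
open scoped Pointwise

noncomputable section

/-! The set `∑ λᵢ (Sᵢˣ × Sᵢʸ)` is the product `(∑ λᵢ Sᵢˣ) × (∑ λᵢ Sᵢʸ)` of two convex
combinations of slices, each relatively weakly open by hypothesis. Since the unit ball of
`X ⊕_∞ Y` is `B_X × B_Y`, such a product is relatively weakly open in it: a point has a basic
weak neighbourhood obtained by pulling back those of its two coordinates along the projections. -/

namespace Set

variable {ι M α β : Type*} [AddCommMonoid α] [AddCommMonoid β]

theorem finsetSum_prod (s : Finset ι) (A : ι → Set α) (B : ι → Set β) :
    ∑ i ∈ s, A i ×ˢ B i = (∑ i ∈ s, A i) ×ˢ (∑ i ∈ s, B i) := by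
  classical
  induction s using Finset.induction_on with
  | empty => simp
  | insert _ _ hi ih => rw [Finset.sum_insert hi, Finset.sum_insert hi, Finset.sum_insert hi, ih,
      prod_add_prod_comm]

theorem finsetSum_smul_prod [SMul M α] [SMul M β] (s : Finset ι) (c : ι → M)
    (A : ι → Set α) (B : ι → Set β) :
    ∑ i ∈ s, c i • (A i ×ˢ B i) = (∑ i ∈ s, c i • A i) ×ˢ (∑ i ∈ s, c i • B i) := by
  simp only [smul_set_prod, finsetSum_prod]

end Set

theorem LinearEquiv.preimage_finsetSum_smul {ι R M N : Type*} [Semiring R]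
    [AddCommMonoid M] [AddCommMonoid N] [Module R M] [Module R N] (e : M ≃ₗ[R] N)
    (s : Finset ι) (c : ι → R) (A : ι → Set N) :
    e ⁻¹' (∑ i ∈ s, c i • A i) = ∑ i ∈ s, c i • e ⁻¹' A i := by
  simp only [← e.image_symm_eq_preimage, Set.image_finsetSum, image_smul_set]

section WithLpProd

variable {X Y : Type*} [NormedAddCommGroup X] [NormedSpace ℝ X]
  [NormedAddCommGroup Y] [NormedSpace ℝ Y] {A : Set X} {B : Set Y}

theorem RelWeakInteriorPt.withLpProd {w : WithLp ⊤ (X × Y)}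
    (hA : RelWeakInteriorPt X A w.fst) (hB : RelWeakInteriorPt Y B w.snd) :
    RelWeakInteriorPt (WithLp ⊤ (X × Y)) (WithLp.linearEquiv ⊤ ℝ (X × Y) ⁻¹' A ×ˢ B) w := by
  classical
  obtain ⟨FX, δX, hδX, hFX⟩ := hA
  obtain ⟨FY, δY, hδY, hFY⟩ := hB
  refine ⟨FX.image (·.comp (WithLp.fstL ⊤ ℝ X Y)) ∪ FY.image (·.comp (WithLp.sndL ⊤ ℝ X Y)),
    min δX δY, lt_min hδX hδY, ?_⟩
  rintro v ⟨hv, hvF⟩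
  rw [mem_closedBall_zero_iff] at hv
  refine ⟨hFX ⟨?_, fun f hf => ?_⟩, hFY ⟨?_, fun f hf => ?_⟩⟩
  · exact mem_closedBall_zero_iff.2 ((WithLp.norm_fst_le _ v).trans hv)
  · exact (hvF _ (Finset.mem_union_left _ (Finset.mem_image_of_mem _ hf))).trans_le
      (min_le_left _ _)
  · exact mem_closedBall_zero_iff.2 ((WithLp.norm_snd_le _ v).trans hv)
  · exact (hvF _ (Finset.mem_union_right _ (Finset.mem_image_of_mem _ hf))).trans_le
      (min_le_right _ _)

theorem RelWeaklyOpen.withLpProd (hA : RelWeaklyOpen X A) (hB : RelWeaklyOpen Y B) :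
    RelWeaklyOpen (WithLp ⊤ (X × Y)) (WithLp.linearEquiv ⊤ ℝ (X × Y) ⁻¹' A ×ˢ B) :=
  fun _ hw => (hA _ hw.1).withLpProd (hB _ hw.2)

end WithLpProd

theorem sum_prod_slices_relWeaklyOpen_infty_sum_general
    {X Y : Type*} [NormedAddCommGroup X] [NormedSpace ℝ X]
    [NormedAddCommGroup Y] [NormedSpace ℝ Y]
    (hX : PropP1 X) (hY : PropP1 Y)
    (n : ℕ) (hn : 0 < n)
    (fX : Fin n → StrongDual ℝ X) (hfX : ∀ i, ‖fX i‖ = 1)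
    (αX : Fin n → ℝ) (hαX : ∀ i, 0 < αX i)
    (fY : Fin n → StrongDual ℝ Y) (hfY : ∀ i, ‖fY i‖ = 1)
    (αY : Fin n → ℝ) (hαY : ∀ i, 0 < αY i)
    (lam : Fin n → ℝ) (hlam : ∀ i, 0 ≤ lam i) (hsum : (∑ i, lam i) = 1) :
    RelWeaklyOpen (WithLp ⊤ (X × Y))
      (∑ i, lam i • {w : WithLp ⊤ (X × Y) |
        (WithLp.equiv ⊤ (X × Y) w).1 ∈ ballSlice X (fX i) (αX i) ∧
        (WithLp.equiv ⊤ (X × Y) w).2 ∈ ballSlice Y (fY i) (αY i)}) := by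
  have hCX : IsCCS X (∑ i, lam i • ballSlice X (fX i) (αX i)) :=
    ⟨n, fX, αX, lam, hn, hfX, hαX, hlam, hsum, rfl⟩
  have hCY : IsCCS Y (∑ i, lam i • ballSlice Y (fY i) (αY i)) :=
    ⟨n, fY, αY, lam, hn, hfY, hαY, hlam, hsum, rfl⟩
  convert (hX _ hCX).withLpProd (hY _ hCY) using 1
  rw [← Set.finsetSum_smul_prod, LinearEquiv.preimage_finsetSum_smul]
  rfl

/-- If `X` and `Y` both have the property that every finite convex
combination of slices of the closed unit ball is relatively weakly open, then for
slices `Sᵢˣ` of `B_X`, `Sᵢʸ` of `B_Y` and convex coefficients `λᵢ`, the set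
`Σᵢ λᵢ (Sᵢˣ × Sᵢʸ)` is relatively weakly open in the closed unit ball of `X ⊕_∞ Y`. -/
theorem sum_prod_slices_relWeaklyOpen_infty_sum
    {X Y : Type*} [NormedAddCommGroup X] [NormedSpace ℝ X] [CompleteSpace X]
    [NormedAddCommGroup Y] [NormedSpace ℝ Y] [CompleteSpace Y]
    (hX : PropP1 X) (hY : PropP1 Y)
    (n : ℕ) (hn : 0 < n)
    (fX : Fin n → StrongDual ℝ X) (hfX : ∀ i, ‖fX i‖ = 1)
    (αX : Fin n → ℝ) (hαX : ∀ i, 0 < αX i)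
    (fY : Fin n → StrongDual ℝ Y) (hfY : ∀ i, ‖fY i‖ = 1)
    (αY : Fin n → ℝ) (hαY : ∀ i, 0 < αY i)
    (lam : Fin n → ℝ) (hlam : ∀ i, 0 ≤ lam i) (hsum : (∑ i, lam i) = 1) :
    RelWeaklyOpen (WithLp ⊤ (X × Y))
      (∑ i, lam i • {w : WithLp ⊤ (X × Y) |
        (WithLp.equiv ⊤ (X × Y) w).1 ∈ ballSlice X (fX i) (αX i) ∧
        (WithLp.equiv ⊤ (X × Y) w).2 ∈ ballSlice Y (fY i) (αY i)}) :=
  sum_prod_slices_relWeaklyOpen_infty_sum_general hX hY n hn fX hfX αX hαX fY hfY αY hαY lam hlam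
    hsum
end
end

section
/- Let X and Y be infinite-dimensional Banach spaces. If every finite convex combination of slices of the closed unit ball of X intersects the unit sphere of X, then every finite convex combination of slices of the closed unit ball of X ⊕_∞ Y intersects the unit sphere of X ⊕_∞ Y. -/
open scoped Pointwise

noncomputable section

/-!
A norm-one functional `F` on `X ⊕_∞ Y` splits as `F (x, y) = f x + g y` with
`‖f‖ + ‖g‖ ≥ 1` and `‖f‖ ≤ 1`. Fix `yᵢ` in the unit ball almost norming `gᵢ`. A point `x` of a
slice of `B_X` determined by `fᵢ / ‖fᵢ‖` (or by any norm-one functional of `X ≠ 0` if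
`fᵢ = 0`) then makes `(x, yᵢ)` a point of the slice `S(Fᵢ, αᵢ)`.
Applying (P3) in `X` to the convex combination of these slices of `B_X` gives
`x = ∑ λᵢ xᵢ` of norm one, and `∑ λᵢ (xᵢ, yᵢ) = (x, ∑ λᵢ yᵢ)` has norm `max 1 ‖∑ λᵢ yᵢ‖ = 1`.
-/

lemma Set.mem_fintype_sum_smul_iff {ι 𝕜 E : Type*} [Fintype ι] [AddCommMonoid E] [SMul 𝕜 E]
    (c : ι → 𝕜) (S : ι → Set E) (x : E) :
    x ∈ ∑ i, c i • S i ↔ ∃ s : ι → E, (∀ i, s i ∈ S i) ∧ ∑ i, c i • s i = x := by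
  rw [Set.mem_fintype_sum]
  constructor
  · rintro ⟨t, ht, rfl⟩
    choose s hs hst using fun i => Set.mem_smul_set.mp (ht i)
    exact ⟨s, hs, Finset.sum_congr rfl fun i _ => hst i⟩
  · rintro ⟨s, hs, rfl⟩
    exact ⟨fun i => c i • s i, fun i => Set.smul_mem_smul_set (hs i), rfl⟩

section Functional

variable {E : Type*} [NormedAddCommGroup E] [NormedSpace ℝ E]

lemma ContinuousLinearMap.exists_norm_le_one_lt_apply (f : StrongDual ℝ E) {c : ℝ}
    (hc : c < ‖f‖) : ∃ x : E, ‖x‖ ≤ 1 ∧ c < f x := by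
  obtain ⟨x, hx, hcx⟩ := f.exists_lt_apply_of_lt_opNorm hc
  rcases le_or_gt 0 (f x) with h | h
  · exact ⟨x, hx.le, by rwa [Real.norm_of_nonneg h] at hcx⟩
  · exact ⟨-x, by simpa using hx.le, by rwa [map_neg, ← Real.norm_of_nonpos h.le]⟩

lemma ContinuousLinearMap.exists_norm_eq_one_eq_norm_smul [Nontrivial E] (f : StrongDual ℝ E) :
    ∃ g : StrongDual ℝ E, ‖g‖ = 1 ∧ f = ‖f‖ • g := by
  by_cases hf : f = 0
  · obtain ⟨g, hg, -⟩ := exists_dual_vector' ℝ (0 : E)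
    exact ⟨g, hg, by simp [hf]⟩
  · have hf' : ‖f‖ ≠ 0 := norm_ne_zero_iff.mpr hf
    refine ⟨‖f‖⁻¹ • f, ?_, ?_⟩
    · rw [norm_smul, norm_inv, norm_norm, inv_mul_cancel₀ hf']
    · rw [smul_smul, mul_inv_cancel₀ hf', one_smul]

end Functional

section ProdDual

variable {p : ENNReal} {X Y : Type*} [NormedAddCommGroup X] [NormedSpace ℝ X]
  [NormedAddCommGroup Y] [NormedSpace ℝ Y]

def dualFst (F : StrongDual ℝ (WithLp p (X × Y))) : StrongDual ℝ X :=
  F.comp ((WithLp.prodContinuousLinearEquiv p ℝ X Y).symm.toContinuousLinearMap.comp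
    (ContinuousLinearMap.inl ℝ X Y))

def dualSnd (F : StrongDual ℝ (WithLp p (X × Y))) : StrongDual ℝ Y :=
  F.comp ((WithLp.prodContinuousLinearEquiv p ℝ X Y).symm.toContinuousLinearMap.comp
    (ContinuousLinearMap.inr ℝ X Y))

lemma dualFst_apply (F : StrongDual ℝ (WithLp p (X × Y))) (x : X) :
    dualFst F x = F (WithLp.toLp p (x, 0)) := rfl

lemma dualSnd_apply (F : StrongDual ℝ (WithLp p (X × Y))) (y : Y) :
    dualSnd F y = F (WithLp.toLp p (0, y)) := rfl

lemma apply_eq_dualFst_add_dualSnd (F : StrongDual ℝ (WithLp p (X × Y)))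
    (z : WithLp p (X × Y)) : F z = dualFst F z.fst + dualSnd F z.snd := by
  rw [dualFst_apply, dualSnd_apply, ← map_add, ← WithLp.toLp_add, Prod.mk_add_mk, add_zero,
    zero_add]
  rfl

variable [Fact (1 ≤ p)]

lemma norm_dualFst_le (F : StrongDual ℝ (WithLp p (X × Y))) : ‖dualFst F‖ ≤ ‖F‖ :=
  ContinuousLinearMap.opNorm_le_bound _ (norm_nonneg F) fun x => by
    simpa [dualFst_apply] using F.le_opNorm (WithLp.toLp p (x, (0 : Y)))

lemma norm_le_norm_dualFst_add_norm_dualSnd (F : StrongDual ℝ (WithLp p (X × Y))) :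
    ‖F‖ ≤ ‖dualFst F‖ + ‖dualSnd F‖ :=
  ContinuousLinearMap.opNorm_le_bound _ (by positivity) fun z => calc
    ‖F z‖ ≤ ‖dualFst F z.fst‖ + ‖dualSnd F z.snd‖ := by
      rw [apply_eq_dualFst_add_dualSnd]; exact norm_add_le _ _
    _ ≤ ‖dualFst F‖ * ‖z‖ + ‖dualSnd F‖ * ‖z‖ := by
      gcongr
      · exact (dualFst F).le_opNorm_of_le (WithLp.norm_fst_le _ z)
      · exact (dualSnd F).le_opNorm_of_le (WithLp.norm_snd_le _ z)
    _ = (‖dualFst F‖ + ‖dualSnd F‖) * ‖z‖ := by ring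

end ProdDual

lemma exists_mapsTo_ballSlice_withLp_infty {X Y : Type*} [NormedAddCommGroup X] [NormedSpace ℝ X]
    [Nontrivial X] [NormedAddCommGroup Y] [NormedSpace ℝ Y]
    (F : StrongDual ℝ (WithLp ⊤ (X × Y))) (hF : ‖F‖ = 1) {α : ℝ} (hα : 0 < α) :
    ∃ (f : StrongDual ℝ X) (β : ℝ) (y : Y), ‖f‖ = 1 ∧ 0 < β ∧ ‖y‖ ≤ 1 ∧
      Set.MapsTo (fun x => WithLp.toLp ⊤ (x, y)) (ballSlice X f β)
        (ballSlice (WithLp ⊤ (X × Y)) F α) := by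
  obtain ⟨f, hf, hFf⟩ := (dualFst F).exists_norm_eq_one_eq_norm_smul
  obtain ⟨y, hy, hFy⟩ :=
    (dualSnd F).exists_norm_le_one_lt_apply (c := ‖dualSnd F‖ - α / 2) (by linarith)
  refine ⟨f, α / 2, y, hf, by positivity, hy, fun x ⟨hx, hfx⟩ => ⟨?_, ?_⟩⟩
  · rw [mem_closedBall_zero_iff] at hx ⊢
    simpa [WithLp.prod_norm_toLp] using ⟨hx, hy⟩
  · have hFx : ‖dualFst F‖ * (1 - α / 2) ≤ dualFst F x := by
      conv_rhs => rw [hFf]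
      exact mul_le_mul_of_nonneg_left hfx.le (norm_nonneg _)
    have hF₁ : ‖dualFst F‖ ≤ 1 := hF ▸ norm_dualFst_le F
    have hF₁₂ : 1 ≤ ‖dualFst F‖ + ‖dualSnd F‖ := hF ▸ norm_le_norm_dualFst_add_norm_dualSnd F
    show 1 - α < F (WithLp.toLp ⊤ (x, y))
    rw [apply_eq_dualFst_add_dualSnd]
    dsimp only [WithLp.toLp_fst, WithLp.toLp_snd]
    nlinarith

theorem propP3_infty_sum_general
    {X Y : Type*} [NormedAddCommGroup X] [NormedSpace ℝ X]
    [NormedAddCommGroup Y] [NormedSpace ℝ Y]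
    (hXinf : ¬ FiniteDimensional ℝ X)
    (hX : PropP3 X) :
    PropP3 (WithLp ⊤ (X × Y)) := by
  have : Nontrivial X := not_subsingleton_iff_nontrivial.mp fun _ => hXinf inferInstance
  rintro C ⟨n, F, α, lam, hn, hF, hα, hlam, hsum, rfl⟩
  choose f β y hf hβ hy hmaps using
    fun i => exists_mapsTo_ballSlice_withLp_infty (F i) (hF i) (hα i)
  obtain ⟨x, hx, hx₁⟩ := hX _ ⟨n, f, β, lam, hn, hf, hβ, hlam, hsum, rfl⟩
  obtain ⟨xs, hxs, rfl⟩ := (Set.mem_fintype_sum_smul_iff _ _ _).mp hx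
  have hy₁ : ‖∑ i, lam i • y i‖ ≤ 1 := by
    simpa using (convex_closedBall (0 : Y) 1).sum_mem (fun i _ => hlam i) hsum
      (fun i _ => mem_closedBall_zero_iff.mpr (hy i))
  refine ⟨WithLp.toLp ⊤ (∑ i, lam i • xs i, ∑ i, lam i • y i), ?_, ?_⟩
  · refine (Set.mem_fintype_sum_smul_iff _ _ _).mpr ⟨_, fun i => hmaps i (hxs i), ?_⟩
    simp [← WithLp.toLp_sum, prod_mk_sum]
  · rw [WithLp.prod_norm_toLp, Prod.norm_mk, hx₁, max_eq_left hy₁]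

/-- If every finite convex combination of slices of the closed unit
ball of `X` intersects the unit sphere of `X`, then every finite convex combination
of slices of the closed unit ball of `X ⊕_∞ Y` intersects the unit sphere of
`X ⊕_∞ Y`. -/
theorem propP3_infty_sum
    {X Y : Type*} [NormedAddCommGroup X] [NormedSpace ℝ X] [CompleteSpace X]
    [NormedAddCommGroup Y] [NormedSpace ℝ Y] [CompleteSpace Y]
    (hXinf : ¬ FiniteDimensional ℝ X) (hYinf : ¬ FiniteDimensional ℝ Y)
    (hX : PropP3 X) :
    PropP3 (WithLp ⊤ (X × Y)) :=
  propP3_infty_sum_general hXinf hX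
end
end
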